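/- arXiv:1305.7512 — 10 statements merged into one kernel-verified Lean document; each statement's English description precedes it below -/
import Mathlib

section
/- Let r and c be real numbers with 0 < r < c. Suppose g, h : ℂ → ℂ are continuous on the closed unit disc, complex-differentiable on the open unit disc, and satisfy g(w)·h(w) = r·w + c for all w in the closed unit disc and |g(w)| = |h(w)| for all w with |w| = 1. Then there is a real constant θ such that g(w) = e^{iθ}·h(w) for all w in the closed unit disc, and consequently g(w)² = e^{iθ}·(r·w + c) for all w in the closed unit disc. -/
/-!
The quotient `g / h` is holomorphic and zero-free on the disc, because `g * h = r w + c` has no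
zero there, and it has modulus one on the boundary circle. The maximum modulus principle, applied
to `g / h` and to `h / g`, bounds both moduli by one, so `|g / h| = 1` on the whole disc; a
holomorphic function of constant modulus is constant.
-/

open Complex Metric Set

theorem mul_add_ne_zero_of_norm_le_one {a b w : ℂ} (hab : ‖a‖ < ‖b‖) (hw : ‖w‖ ≤ 1) :
    a * w + b ≠ 0 := by
  intro h0
  have hb : b = -(a * w) := eq_neg_of_add_eq_zero_right h0
  have : ‖b‖ ≤ ‖a‖ := by
    rw [hb, norm_neg, norm_mul]
    exact mul_le_of_le_one_right (norm_nonneg a) hw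
  linarith

section MaxModulus

variable {E : Type*} [NormedAddCommGroup E] [NormedSpace ℂ E] [Nontrivial E] {U : Set E}

theorem DiffContOnCl.norm_eq_one_of_forall_mem_frontier {f : E → ℂ} (hU : Bornology.IsBounded U)
    (hf : DiffContOnCl ℂ f U) (hf₀ : ∀ z ∈ closure U, f z ≠ 0)
    (hfr : ∀ z ∈ frontier U, ‖f z‖ = 1) {z : E} (hz : z ∈ closure U) : ‖f z‖ = 1 := by
  have hle : ‖f z‖ ≤ 1 :=
    norm_le_of_forall_mem_frontier_norm_le hU hf (fun w hw => (hfr w hw).le) hz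
  have hinv_le : ‖f⁻¹ z‖ ≤ 1 :=
    norm_le_of_forall_mem_frontier_norm_le hU (hf.inv hf₀)
      (fun w hw => by simp [hfr w hw]) hz
  rw [Pi.inv_apply, norm_inv] at hinv_le
  have hpos : 0 < ‖f z‖ := norm_pos_iff.mpr (hf₀ z hz)
  exact le_antisymm hle ((inv_le_one₀ hpos).mp hinv_le)

theorem DiffContOnCl.exists_eqOn_exp_mul_I_of_norm_eq_one {f : E → ℂ}
    (hU : Bornology.IsBounded U) (hUo : IsOpen U) (hUc : IsPreconnected U) {z₀ : E}
    (hz₀ : z₀ ∈ U) (hf : DiffContOnCl ℂ f U) (hf₀ : ∀ z ∈ closure U, f z ≠ 0)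
    (hfr : ∀ z ∈ frontier U, ‖f z‖ = 1) :
    ∃ θ : ℝ, EqOn f (Function.const E (exp (θ * I))) (closure U) := by
  have hnorm : ∀ z ∈ closure U, ‖f z‖ = 1 := fun z hz =>
    hf.norm_eq_one_of_forall_mem_frontier hU hf₀ hfr hz
  have hmax : IsMaxOn (norm ∘ f) U z₀ := fun z hz => by
    simp [hnorm z (subset_closure hz), hnorm z₀ (subset_closure hz₀)]
  refine ⟨arg (f z₀), ?_⟩
  have hexp : exp (arg (f z₀) * I) = f z₀ := by
    simpa [hnorm z₀ (subset_closure hz₀)] using norm_mul_exp_arg_mul_I (f z₀)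
  rw [hexp]
  exact eqOn_closure_of_isPreconnected_of_isMaxOn_norm hUc hUo hf hz₀ hmax

theorem DiffContOnCl.exists_eq_exp_mul_I_mul_of_norm_eq {g h : E → ℂ}
    (hU : Bornology.IsBounded U) (hUo : IsOpen U) (hUc : IsPreconnected U) {z₀ : E}
    (hz₀ : z₀ ∈ U) (hg : DiffContOnCl ℂ g U) (hh : DiffContOnCl ℂ h U)
    (hg₀ : ∀ z ∈ closure U, g z ≠ 0) (hh₀ : ∀ z ∈ closure U, h z ≠ 0)
    (hgh : ∀ z ∈ frontier U, ‖g z‖ = ‖h z‖) :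
    ∃ θ : ℝ, ∀ z ∈ closure U, g z = exp (θ * I) * h z := by
  have hq : DiffContOnCl ℂ (fun z => g z * h⁻¹ z) U := hg.smul (hh.inv hh₀)
  obtain ⟨θ, hθ⟩ := hq.exists_eqOn_exp_mul_I_of_norm_eq_one hU hUo hUc hz₀
    (fun z hz => mul_ne_zero (hg₀ z hz) (inv_ne_zero (hh₀ z hz)))
    (fun z hz => by
      have hz' : z ∈ closure U := frontier_subset_closure hz
      simp [hgh z hz, hh₀ z hz'])
  refine ⟨θ, fun z hz => ?_⟩
  have := hθ hz
  simp only [Pi.inv_apply, Function.const_apply] at this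
  rw [← this, inv_mul_cancel_right₀ (hh₀ z hz)]

end MaxModulus

/-- Analytic core of Proposition `bdisc`: if `g·h = r·w + c` on the closed unit disc,
`g, h` are holomorphic on the open disc and continuous up to the boundary, and
`|g| = |h|` on the boundary circle, then `g = e^{iθ}·h` for a real constant `θ`,
and hence `g² = e^{iθ}·(r·w + c)`. -/
theorem stmt_0 (r c : ℝ) (hr : 0 < r) (hrc : r < c)
    (g h : ℂ → ℂ)
    (hgc : ContinuousOn g (Metric.closedBall 0 1))
    (hhc : ContinuousOn h (Metric.closedBall 0 1))
    (hgd : DifferentiableOn ℂ g (Metric.ball 0 1))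
    (hhd : DifferentiableOn ℂ h (Metric.ball 0 1))
    (hprod : ∀ w ∈ Metric.closedBall (0 : ℂ) 1, g w * h w = r * w + c)
    (hbd : ∀ w : ℂ, ‖w‖ = 1 → ‖g w‖ = ‖h w‖) :
    ∃ θ : ℝ, ∀ w ∈ Metric.closedBall (0 : ℂ) 1,
      g w = Complex.exp (θ * Complex.I) * h w ∧
      (g w) ^ 2 = Complex.exp (θ * Complex.I) * (r * w + c) := by
  have hcl : closure (ball (0 : ℂ) 1) = closedBall 0 1 := closure_ball 0 one_ne_zero
  have hprod₀ : ∀ w ∈ closure (ball (0 : ℂ) 1), g w * h w ≠ 0 := fun w hw => by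
    rw [hcl] at hw
    rw [hprod w hw]
    refine mul_add_ne_zero_of_norm_le_one ?_ (mem_closedBall_zero_iff.mp hw)
    simp only [norm_real, Real.norm_eq_abs, abs_of_pos hr, abs_of_pos (hr.trans hrc), hrc]
  obtain ⟨θ, hθ⟩ := DiffContOnCl.exists_eq_exp_mul_I_mul_of_norm_eq isBounded_ball isOpen_ball
    (convex_ball 0 1).isPreconnected (mem_ball_self one_pos)
    (DiffContOnCl.mk_ball hgd hgc) (DiffContOnCl.mk_ball hhd hhc)
    (fun w hw => left_ne_zero_of_mul (hprod₀ w hw)) (fun w hw => right_ne_zero_of_mul (hprod₀ w hw))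
    (fun w hw => hbd w (by rwa [frontier_ball (0 : ℂ) one_ne_zero, mem_sphere_zero_iff_norm] at hw))
  refine ⟨θ, fun w hw => ⟨hθ w (hcl ▸ hw), ?_⟩⟩
  rw [← hprod w hw, sq]
  nth_rw 1 [hθ w (hcl ▸ hw)]
  ring
end

section
/- Let 0 < r < c be real numbers, a ∈ ℂ with 0 < |a| < 1, η₀, η₁, η₂ ∈ ℂ with |ηⱼ| ≤ 1 for each j, and ζ ∈ ℂ with |ζ| ≥ 1, such that the polynomial identity r(w − a) + c·w³·(1 − conj(a)·w) = −c·conj(a)·(w − ζ)(w − η₀)(w − η₁)(w − η₂) holds for all w ∈ ℂ. Then η₀η₁η₂ ≠ 0 and |a·r/(η₀η₁η₂)| ≥ c/4. -/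
/-! Comparing constant and cubic coefficients gives `a·r/(η₀η₁η₂) = c·conj(a)·ζ` and
`c = c·conj(a)·(ζ + η₀ + η₁ + η₂)`. Since `‖ζ + η₀ + η₁ + η₂‖ ≤ 4‖ζ‖`, the second relation
yields `|c| ≤ 4‖c·conj(a)·ζ‖`. -/

namespace Xi

variable {K : Type*} [Field K] {r c a b ζ η₀ η₁ η₂ : K}

theorem const_coeff_eq
    (hfact : ∀ w : K, r * (w - a) + c * w ^ 3 * (1 - b * w) =
      -c * b * (w - ζ) * (w - η₀) * (w - η₁) * (w - η₂)) :
    r * a = c * b * ζ * (η₀ * η₁ * η₂) := by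
  linear_combination -hfact 0

-- The odd part of the identity at `w = ±1, ±2` isolates the `w³` coefficient.
theorem cubic_coeff_eq [CharZero K]
    (hfact : ∀ w : K, r * (w - a) + c * w ^ 3 * (1 - b * w) =
      -c * b * (w - ζ) * (w - η₀) * (w - η₁) * (w - η₂)) :
    c = c * b * (ζ + η₀ + η₁ + η₂) := by
  linear_combination (hfact 2 - hfact (-2) - 2 * hfact 1 + 2 * hfact (-1)) / 12

end Xi

theorem norm_add_add_add_le_four_mul {E : Type*} [SeminormedAddCommGroup E] {ζ η₀ η₁ η₂ : E}
    (hη₀ : ‖η₀‖ ≤ 1) (hη₁ : ‖η₁‖ ≤ 1) (hη₂ : ‖η₂‖ ≤ 1) (hζ : 1 ≤ ‖ζ‖) :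
    ‖ζ + η₀ + η₁ + η₂‖ ≤ 4 * ‖ζ‖ :=
  calc ‖ζ + η₀ + η₁ + η₂‖ ≤ ‖ζ‖ + ‖η₀‖ + ‖η₁‖ + ‖η₂‖ := norm_add₄_le
    _ ≤ 4 * ‖ζ‖ := by linarith

theorem stmt_1_general (r c : ℝ) (hr : 0 < r)
    (a η₀ η₁ η₂ ζ : ℂ)
    (ha0 : 0 < ‖a‖)
    (hη₀ : ‖η₀‖ ≤ 1) (hη₁ : ‖η₁‖ ≤ 1) (hη₂ : ‖η₂‖ ≤ 1)
    (hζ : 1 ≤ ‖ζ‖)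
    (hfact : ∀ w : ℂ,
      r * (w - a) + c * w ^ 3 * (1 - (starRingEnd ℂ) a * w) =
        -c * (starRingEnd ℂ) a * (w - ζ) * (w - η₀) * (w - η₁) * (w - η₂)) :
    η₀ * η₁ * η₂ ≠ 0 ∧ c / 4 ≤ ‖a * r / (η₀ * η₁ * η₂)‖ := by
  have hconst := Xi.const_coeff_eq hfact
  have hcubic := Xi.cubic_coeff_eq hfact
  have hra : (r : ℂ) * a ≠ 0 := mul_ne_zero (by exact_mod_cast hr.ne') (norm_pos_iff.mp ha0)
  have hp : η₀ * η₁ * η₂ ≠ 0 := fun h ↦ hra (by rw [hconst, h, mul_zero])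
  refine ⟨hp, ?_⟩
  have hquot : a * r / (η₀ * η₁ * η₂) = c * (starRingEnd ℂ) a * ζ := by
    rw [div_eq_iff hp, mul_comm a, hconst]
  have hsum := norm_add_add_add_le_four_mul hη₀ hη₁ hη₂ hζ
  rw [hquot]
  calc c / 4 ≤ ‖(c : ℂ)‖ / 4 := by
        gcongr; rw [Complex.norm_real]; exact Real.le_norm_self c
    _ = ‖(c : ℂ) * (starRingEnd ℂ) a‖ * ‖ζ + η₀ + η₁ + η₂‖ / 4 := by
        rw [← norm_mul, ← hcubic]
    _ ≤ ‖(c : ℂ) * (starRingEnd ℂ) a‖ * (4 * ‖ζ‖) / 4 := by gcongr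
    _ = ‖c * (starRingEnd ℂ) a * ζ‖ := by rw [norm_mul _ ζ]; ring

/-- Lemma `h0a`, first assertion: from the factorization of
`Ξ(w) = r(w − a) + c·w³·(1 − conj(a)·w)` with roots `ηⱼ` in the closed unit disc and
`ζ` outside the open unit disc, the quantity `h(0)² = a·r/(η₀η₁η₂)` satisfies
`|h(0)²| ≥ c/4`. -/
theorem stmt_1 (r c : ℝ) (hr : 0 < r) (hrc : r < c)
    (a η₀ η₁ η₂ ζ : ℂ)
    (ha0 : 0 < ‖a‖) (ha1 : ‖a‖ < 1)
    (hη₀ : ‖η₀‖ ≤ 1) (hη₁ : ‖η₁‖ ≤ 1) (hη₂ : ‖η₂‖ ≤ 1)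
    (hζ : 1 ≤ ‖ζ‖)
    (hfact : ∀ w : ℂ,
      r * (w - a) + c * w ^ 3 * (1 - (starRingEnd ℂ) a * w) =
        -c * (starRingEnd ℂ) a * (w - ζ) * (w - η₀) * (w - η₁) * (w - η₂)) :
    η₀ * η₁ * η₂ ≠ 0 ∧ c / 4 ≤ ‖a * r / (η₀ * η₁ * η₂)‖ :=
  stmt_1_general r c hr a η₀ η₁ η₂ ζ ha0 hη₀ hη₁ hη₂ hζ hfact
end

section
/- Let 0 < r < c be real numbers, b, ν ∈ ℂ with 0 < |b| < 1 and |ν| < 1, η₀, …, η₅ ∈ ℂ with |ηⱼ| ≤ 1 for each j, and ζ ∈ ℂ with |ζ| ≥ 1, such that the polynomial identity r(w − b)(1 − conj(ν)·w)³ + c·w³·(1 − conj(b)·w)(w − ν)³ = −c·conj(b)·(w − ζ)·(w − η₀)(w − η₁)(w − η₂)(w − η₃)(w − η₄)(w − η₅) holds for all w ∈ ℂ. Then η₀η₁η₂η₃η₄η₅ ≠ 0 and |b·r/(η₀η₁η₂η₃η₄η₅)| ≥ c/10. -/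
/-!
Comparing the constant and the `w⁶` coefficients of the factorization gives
`−r b = c b̄ ζ ∏ ηⱼ` and `1 + 3 b̄ ν = b̄ (ζ + ∑ ηⱼ)`. The first shows `∏ ηⱼ ≠ 0` and
`‖b r / ∏ ηⱼ‖ = c ‖b̄ ζ‖`. The second, with `‖ν‖, ‖ηⱼ‖ ≤ 1`, gives `‖b̄ ζ‖ ≥ 1 − 9 ‖b‖`,
while `‖ζ‖ ≥ 1` gives `‖b̄ ζ‖ ≥ ‖b‖`; hence `‖b̄ ζ‖ ≥ 1/10`.
-/

open ComplexConjugate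

theorem one_div_ten_le_norm_mul {𝕜 : Type*} [RCLike 𝕜] {β ζ ν s : 𝕜}
    (h : 1 + 3 * β * ν = β * (ζ + s)) (hν : ‖ν‖ ≤ 1) (hs : ‖s‖ ≤ 6) (hζ : 1 ≤ ‖ζ‖) :
    1 / 10 ≤ ‖β * ζ‖ := by
  have hβζ : ‖β‖ ≤ ‖β * ζ‖ := by
    rw [norm_mul]; exact le_mul_of_one_le_right (norm_nonneg β) hζ
  have hβν : ‖3 * β * ν‖ ≤ 3 * ‖β‖ := by
    rw [norm_mul, norm_mul, RCLike.norm_ofNat]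
    exact mul_le_of_le_one_right (by positivity) hν
  have hβs : ‖β * s‖ ≤ 6 * ‖β‖ := by
    rw [norm_mul, mul_comm]; exact mul_le_mul_of_nonneg_right hs (norm_nonneg β)
  have hone : (1 : 𝕜) = β * ζ + β * s - 3 * β * ν := by linear_combination h
  have hsplit : 1 ≤ ‖β * ζ‖ + ‖β * s‖ + ‖3 * β * ν‖ := by
    calc (1 : ℝ) = ‖β * ζ + β * s - 3 * β * ν‖ := by rw [← hone, norm_one]
      _ ≤ ‖β * ζ + β * s‖ + ‖3 * β * ν‖ := norm_sub_le _ _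
      _ ≤ ‖β * ζ‖ + ‖β * s‖ + ‖3 * β * ν‖ := by gcongr; exact norm_add_le _ _
  linarith

def XiFactors (r c : ℝ) (b ν ζ η₀ η₁ η₂ η₃ η₄ η₅ : ℂ) : Prop :=
  ∀ w : ℂ, r * (w - b) * (1 - conj ν * w) ^ 3 + c * w ^ 3 * (1 - conj b * w) * (w - ν) ^ 3 =
    -c * conj b * (w - ζ) * (w - η₀) * (w - η₁) * (w - η₂) * (w - η₃) * (w - η₄) * (w - η₅)

namespace XiFactors

variable {r c : ℝ} {b ν ζ η₀ η₁ η₂ η₃ η₄ η₅ : ℂ}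

theorem constCoeff (h : XiFactors r c b ν ζ η₀ η₁ η₂ η₃ η₄ η₅) :
    -(r * b) = c * conj b * ζ * (η₀ * η₁ * η₂ * η₃ * η₄ * η₅) := by
  linear_combination h 0

theorem coeffSix (h : XiFactors r c b ν ζ η₀ η₁ η₂ η₃ η₄ η₅) (hc : c ≠ 0) :
    1 + 3 * conj b * ν = conj b * (ζ + (η₀ + η₁ + η₂ + η₃ + η₄ + η₅)) := by
  have hcC : (c : ℂ) ≠ 0 := by exact_mod_cast hc
  refine mul_left_cancel₀ hcC ?_
  -- finite-difference weights reading off the `w⁶` coefficient of a degree-7 polynomial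
  -- from its values at `0, 1, …, 7`
  linear_combination (1 / 180 : ℂ) * h 0 + (-3 / 80 : ℂ) * h 1 + (13 / 120 : ℂ) * h 2 +
    (-25 / 144 : ℂ) * h 3 + (1 / 6 : ℂ) * h 4 + (-23 / 240 : ℂ) * h 5 + (11 / 360 : ℂ) * h 6 +
    (-1 / 240 : ℂ) * h 7

end XiFactors

theorem stmt_2_general (r c : ℝ) (hr : 0 < r) (hrc : r < c)
    (b ν η₀ η₁ η₂ η₃ η₄ η₅ ζ : ℂ)
    (hb0 : 0 < ‖b‖) (hν : ‖ν‖ < 1)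
    (hη₀ : ‖η₀‖ ≤ 1) (hη₁ : ‖η₁‖ ≤ 1) (hη₂ : ‖η₂‖ ≤ 1)
    (hη₃ : ‖η₃‖ ≤ 1) (hη₄ : ‖η₄‖ ≤ 1) (hη₅ : ‖η₅‖ ≤ 1)
    (hζ : 1 ≤ ‖ζ‖)
    (hfact : ∀ w : ℂ,
      r * (w - b) * (1 - (starRingEnd ℂ) ν * w) ^ 3 +
        c * w ^ 3 * (1 - (starRingEnd ℂ) b * w) * (w - ν) ^ 3 =
      -c * (starRingEnd ℂ) b * (w - ζ) *
        (w - η₀) * (w - η₁) * (w - η₂) * (w - η₃) * (w - η₄) * (w - η₅)) :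
    η₀ * η₁ * η₂ * η₃ * η₄ * η₅ ≠ 0 ∧
      c / 10 ≤ ‖b * r / (η₀ * η₁ * η₂ * η₃ * η₄ * η₅)‖ := by
  have hXi : XiFactors r c b ν ζ η₀ η₁ η₂ η₃ η₄ η₅ := hfact
  have hc : 0 < c := hr.trans hrc
  have hrb : (r * b : ℂ) ≠ 0 := mul_ne_zero (by exact_mod_cast hr.ne') (norm_pos_iff.mp hb0)
  have hconst := hXi.constCoeff
  set p := η₀ * η₁ * η₂ * η₃ * η₄ * η₅
  have hp : p ≠ 0 := by
    rintro hp; rw [hp, mul_zero, neg_eq_zero] at hconst; exact hrb hconst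
  have hquot : b * r / p = -(c * (conj b * ζ)) := by
    field_simp; linear_combination -hconst
  have hsum : ‖η₀ + η₁ + η₂ + η₃ + η₄ + η₅‖ ≤ 6 :=
    (norm_add_le_of_le (norm_add_le_of_le (norm_add_le_of_le (norm_add_le_of_le
      (norm_add_le_of_le hη₀ hη₁) hη₂) hη₃) hη₄) hη₅).trans (by norm_num)
  have hbζ : 1 / 10 ≤ ‖conj b * ζ‖ :=
    one_div_ten_le_norm_mul (hXi.coeffSix hc.ne') hν.le hsum hζ
  refine ⟨hp, ?_⟩
  rw [hquot, norm_neg, norm_mul, Complex.norm_real, Real.norm_of_nonneg hc.le]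
  linarith [mul_le_mul_of_nonneg_left hbζ hc.le]

/-- Lemma `asymp`, first assertion: from the factorization of the degree 7 polynomial
`Ξ(w) = r(w − b)(1 − conj(ν)w)³ + c·w³·(1 − conj(b)w)(w − ν)³` with roots `ηⱼ` in the
closed unit disc and `ζ` outside the open unit disc, the quantity
`h(0)² = −b·r/(η₀⋯η₅)` satisfies `|h(0)²| ≥ c/10`. -/
theorem stmt_2 (r c : ℝ) (hr : 0 < r) (hrc : r < c)
    (b ν η₀ η₁ η₂ η₃ η₄ η₅ ζ : ℂ)
    (hb0 : 0 < ‖b‖) (hb1 : ‖b‖ < 1) (hν : ‖ν‖ < 1)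
    (hη₀ : ‖η₀‖ ≤ 1) (hη₁ : ‖η₁‖ ≤ 1) (hη₂ : ‖η₂‖ ≤ 1)
    (hη₃ : ‖η₃‖ ≤ 1) (hη₄ : ‖η₄‖ ≤ 1) (hη₅ : ‖η₅‖ ≤ 1)
    (hζ : 1 ≤ ‖ζ‖)
    (hfact : ∀ w : ℂ,
      r * (w - b) * (1 - (starRingEnd ℂ) ν * w) ^ 3 +
        c * w ^ 3 * (1 - (starRingEnd ℂ) b * w) * (w - ν) ^ 3 =
      -c * (starRingEnd ℂ) b * (w - ζ) *
        (w - η₀) * (w - η₁) * (w - η₂) * (w - η₃) * (w - η₄) * (w - η₅)) :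
    η₀ * η₁ * η₂ * η₃ * η₄ * η₅ ≠ 0 ∧
      c / 10 ≤ ‖b * r / (η₀ * η₁ * η₂ * η₃ * η₄ * η₅)‖ :=
  stmt_2_general r c hr hrc b ν η₀ η₁ η₂ η₃ η₄ η₅ ζ hb0 hν hη₀ hη₁ hη₂ hη₃ hη₄ hη₅ hζ hfact
end

section
/- Let 0 < r < c be real numbers. For every ε > 0 there exists t₀ ∈ (0,1) such that for all t ∈ (0, t₀), all θ ∈ ℝ, and all a, η₀, η₁, η₂, ζ ∈ ℂ with 0 < |a| < 1, |ηⱼ| < 1 for each j, and |ζ| > 1, satisfying both the polynomial identity r(w − a) + c·w³·(1 − conj(a)·w) = −c·conj(a)·(w − ζ)(w − η₀)(w − η₁)(w − η₂) for all w ∈ ℂ and the constraint a·r·((1−t)/t)²·(η₀η₁η₂)³ = e^{6iθ}, one has, after a suitable permutation of the indices 0,1,2: |a| < ε, |η₀| < ε, |η₁ − i·√(r/c)| < ε, and |η₂ + i·√(r/c)| < ε. -/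
/-!
Write `e₁, e₂, e₃` for the elementary symmetric functions of the `ηⱼ`. Comparing
coefficients gives `conj a · (ζ + e₁) = 1`, `ζ e₁ = -e₂`, `c ζ e₃ = r` and
`c e₂ - r = c · conj a · (e₁ e₂ - e₃)`.
So `|a ζ| ≈ 1` and `|e₃| ≍ |a|`, and the boundary constraint `|a| r ((1-t)/t)² |e₃|³ = 1`
forces `|a|⁴ = O(t²)`. Then `e₁, e₃ = O(|a|)` and `e₂ = r/c + O(|a|²)`: one root is small, and
the other two are the roots of a small perturbation of `X² + r/c`, hence close to `±i√(r/c)`.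
-/

open Complex Filter Topology

lemma le_or_le_of_mul_le_sq {x y ρ : ℝ} (hρ : 0 ≤ ρ) (h : x * y ≤ ρ ^ 2) : x ≤ ρ ∨ y ≤ ρ := by
  by_contra! hxy
  nlinarith [mul_lt_mul'' hxy.1 hxy.2 hρ hρ]

lemma roots_near_of_add_mul_near {K : Type*} [NormedField K] {u v z : K} {δ ρ : ℝ}
    (hu : ‖u‖ ≤ 1) (hsum : ‖u + v‖ ≤ δ) (hprod : ‖u * v + z ^ 2‖ ≤ δ) (hρ : 0 ≤ ρ)
    (hδρ : 2 * δ ≤ ρ ^ 2) :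
    (‖u - z‖ ≤ ρ ∧ ‖v + z‖ ≤ ρ + δ) ∨ (‖u + z‖ ≤ ρ ∧ ‖v - z‖ ≤ ρ + δ) := by
  have hfactor : ‖u - z‖ * ‖u + z‖ ≤ ρ ^ 2 := calc
    ‖u - z‖ * ‖u + z‖ = ‖u * (u + v) - (u * v + z ^ 2)‖ := by rw [← norm_mul]; ring_nf
    _ ≤ ‖u‖ * ‖u + v‖ + ‖u * v + z ^ 2‖ := (norm_sub_le _ _).trans_eq (by rw [norm_mul])
    _ ≤ 1 * δ + δ := by gcongr
    _ ≤ ρ ^ 2 := by linarith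
  rcases le_or_le_of_mul_le_sq hρ hfactor with h | h
  · refine Or.inl ⟨h, ?_⟩
    calc ‖v + z‖ = ‖(u + v) - (u - z)‖ := by ring_nf
      _ ≤ ρ + δ := by linarith [norm_sub_le (u + v) (u - z)]
  · refine Or.inr ⟨h, ?_⟩
    calc ‖v - z‖ = ‖(u + v) - (u + z)‖ := by ring_nf
      _ ≤ ρ + δ := by linarith [norm_sub_le (u + v) (u + z)]

lemma exists_norm_le_of_norm_prod_le {ι K : Type*} [Fintype ι] [Nonempty ι] [NormedField K]
    (η : ι → K) {κ : ℝ} (hκ : 0 < κ) (h : ‖∏ i, η i‖ ≤ κ ^ Fintype.card ι) :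
    ∃ i, ‖η i‖ ≤ κ := by
  by_contra! hlt
  have := Finset.prod_lt_prod_of_nonempty (fun i _ => hκ) (fun i _ => hlt i) Finset.univ_nonempty
  simp only [Finset.prod_const, Finset.card_univ] at this
  rw [norm_prod] at h
  linarith

lemma sum_three_comp_perm {M : Type*} [AddCommMonoid M] (η : Fin 3 → M) (σ : Equiv.Perm (Fin 3)) :
    η (σ 0) + η (σ 1) + η (σ 2) = η 0 + η 1 + η 2 := by
  simpa only [Fin.sum_univ_three] using Equiv.sum_comp σ η

lemma esymm_two_three_comp_perm {K : Type*} [Field K] [CharZero K] (η : Fin 3 → K)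
    (σ : Equiv.Perm (Fin 3)) :
    η (σ 0) * η (σ 1) + η (σ 0) * η (σ 2) + η (σ 1) * η (σ 2) =
      η 0 * η 1 + η 0 * η 2 + η 1 * η 2 := by
  have hsq := sum_three_comp_perm (fun i => η i ^ 2) σ
  have hsum := sum_three_comp_perm η σ
  apply mul_left_cancel₀ (two_ne_zero (α := K))
  linear_combination (η (σ 0) + η (σ 1) + η (σ 2) + (η 0 + η 1 + η 2)) * hsum - hsq

lemma exists_perm_roots_near {K : Type*} [NormedField K] [CharZero K] {η : Fin 3 → K} {z : K}
    {μ : ℝ} (hμ : 0 < μ) (hμ1 : μ ≤ 1) (hη : ∀ j, ‖η j‖ ≤ 1)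
    (he₁ : ‖η 0 + η 1 + η 2‖ ≤ μ) (he₂ : ‖η 0 * η 1 + η 0 * η 2 + η 1 * η 2 + z ^ 2‖ ≤ μ)
    (he₃ : ‖η 0 * η 1 * η 2‖ ≤ μ ^ 3) :
    ∃ σ : Equiv.Perm (Fin 3), ‖η (σ 0)‖ ≤ μ ∧
      ‖η (σ 1) - z‖ ≤ √(6 * μ) + 3 * μ ∧ ‖η (σ 2) + z‖ ≤ √(6 * μ) + 3 * μ := by
  obtain ⟨j, hj⟩ := exists_norm_le_of_norm_prod_le η hμ (by simpa [Fin.prod_univ_three] using he₃)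
  obtain ⟨σ, rfl⟩ : ∃ σ : Equiv.Perm (Fin 3), σ 0 = j := ⟨Equiv.swap 0 j, by simp⟩
  have hsum : ‖η (σ 1) + η (σ 2)‖ ≤ 2 * μ := calc
    ‖η (σ 1) + η (σ 2)‖ = ‖(η 0 + η 1 + η 2) - η (σ 0)‖ := by
      rw [← sum_three_comp_perm η σ]; ring_nf
    _ ≤ μ + μ := (norm_sub_le _ _).trans (add_le_add he₁ hj)
    _ = 2 * μ := by ring
  have hprod : ‖η (σ 1) * η (σ 2) + z ^ 2‖ ≤ 3 * μ := calc
    ‖η (σ 1) * η (σ 2) + z ^ 2‖ =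
        ‖(η 0 * η 1 + η 0 * η 2 + η 1 * η 2 + z ^ 2) - η (σ 0) * (η (σ 1) + η (σ 2))‖ := by
      rw [← esymm_two_three_comp_perm η σ]; ring_nf
    _ ≤ μ + μ * (2 * μ) := (norm_sub_le _ _).trans (add_le_add he₂ (by rw [norm_mul]; gcongr))
    _ ≤ 3 * μ := by nlinarith
  have hρ : 2 * (3 * μ) ≤ √(6 * μ) ^ 2 := by rw [Real.sq_sqrt (by positivity)]; linarith
  rcases roots_near_of_add_mul_near (hη _) (hsum.trans (by linarith)) hprod (by positivity) hρ
    with ⟨hu, hv⟩ | ⟨hu, hv⟩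
  · exact ⟨σ, hj, by linarith, hv⟩
  · refine ⟨σ * Equiv.swap 1 2, ?_, ?_, ?_⟩ <;>
      simp only [Equiv.Perm.mul_apply, Equiv.swap_apply_left, Equiv.swap_apply_right,
        Equiv.swap_apply_of_ne_of_ne (by decide : (0 : Fin 3) ≠ 1) (by decide : (0 : Fin 3) ≠ 2)]
    · exact hj
    · exact hv
    · linarith

lemma vieta_of_forall_eq {K : Type*} [Field K] [CharZero K] {r c a b ζ x y z : K}
    (h : ∀ w, r * (w - a) + c * w ^ 3 * (1 - b * w) =
      -c * b * (w - ζ) * (w - x) * (w - y) * (w - z)) :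
    c * b * (ζ + (x + y + z)) = c ∧
    c * b * (ζ * (x + y + z) + (x * y + x * z + y * z)) = 0 ∧
    c * b * (ζ * (x * y + x * z + y * z) + x * y * z) = r ∧
    c * b * (ζ * (x * y * z)) = r * a := by
  have h₀ := h 0
  have h₁ := h 1
  have h₂ := h 2
  have hm := h (-1)
  refine ⟨?_, ?_, ?_, ?_⟩
  · linear_combination (-1/6 : K) * h₂ + (1/2 : K) * h₁ + (1/6 : K) * hm - (1/2 : K) * h₀
  · linear_combination (1/2 : K) * h₁ + (1/2 : K) * hm - h₀
  · linear_combination (1/6 : K) * h₂ - h₁ + (1/3 : K) * hm + (1/2 : K) * h₀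
  · linear_combination h₀

lemma norm_relations_of_forall_eq {r c : ℝ} {a ζ x y z : ℂ} (hr : 0 < r) (hc : 0 < c)
    (ha : a ≠ 0)
    (h : ∀ w : ℂ, r * (w - a) + c * w ^ 3 * (1 - (starRingEnd ℂ) a * w) =
      -c * (starRingEnd ℂ) a * (w - ζ) * (w - x) * (w - y) * (w - z)) :
    |‖a‖ * ‖ζ‖ - 1| ≤ ‖a‖ * ‖x + y + z‖ ∧
    ‖ζ‖ * ‖x + y + z‖ = ‖x * y + x * z + y * z‖ ∧
    c * ‖ζ‖ * ‖x * y * z‖ = r ∧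
    ‖x * y + x * z + y * z - r / c‖ ≤
      ‖a‖ * (‖x + y + z‖ * ‖x * y + x * z + y * z‖ + ‖x * y * z‖) := by
  obtain ⟨e₁, e₂, e₃, e₄⟩ := vieta_of_forall_eq h
  have hc0 : (c : ℂ) ≠ 0 := by exact_mod_cast hc.ne'
  have hb0 : (starRingEnd ℂ) a ≠ 0 := by simpa using ha
  set b := (starRingEnd ℂ) a
  have hb : ‖b‖ = ‖a‖ := Complex.norm_conj a
  refine ⟨?_, ?_, ?_, ?_⟩
  · have hbζ : b * ζ - 1 = -(b * (x + y + z)) := mul_left_cancel₀ hc0 (by linear_combination e₁)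
    have := abs_norm_sub_norm_le (b * ζ) 1
    rwa [hbζ, norm_neg, norm_mul, norm_mul, norm_one, hb] at this
  · rw [← norm_mul, show ζ * (x + y + z) = -(x * y + x * z + y * z) from
      mul_left_cancel₀ (mul_ne_zero hc0 hb0) (by linear_combination e₂), norm_neg]
  · have := congrArg norm e₄
    simp only [norm_mul, hb, norm_real, Real.norm_of_nonneg hr.le,
      Real.norm_of_nonneg hc.le] at this
    apply mul_left_cancel₀ (norm_ne_zero_iff.mpr ha)
    rw [norm_mul, norm_mul]
    linear_combination this
  · have key : x * y + x * z + y * z - r / c =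
        b * ((x + y + z) * (x * y + x * z + y * z) - x * y * z) :=
      mul_left_cancel₀ hc0 (by
        rw [mul_sub, mul_div_cancel₀ _ hc0]
        linear_combination e₃ - (x * y + x * z + y * z) * e₁)
    rw [key, norm_mul, hb]
    gcongr
    exact (norm_sub_le _ _).trans (by rw [norm_mul])

lemma pow_four_le_of_norm_relations {A Z P r c t : ℝ} (hA : 0 ≤ A) (hP : 0 ≤ P) (hr : 0 < r)
    (hc : 0 < c) (ht : 0 < t) (ht2 : t ≤ 1 / 2) (hAZ : A * Z ≤ 4) (hZP : c * Z * P = r)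
    (hcon : A * r * ((1 - t) / t) ^ 2 * P ^ 3 = 1) :
    r ^ 4 * A ^ 4 ≤ 256 * c ^ 3 * t ^ 2 := by
  set X := (1 - t) / t
  have hrA : r * A ≤ 4 * (c * P) := calc
    r * A = A * Z * (c * P) := by rw [← hZP]; ring
    _ ≤ 4 * (c * P) := by gcongr
  have hX : r ^ 4 * X ^ 2 * A ^ 4 ≤ 64 * c ^ 3 := calc
    r ^ 4 * X ^ 2 * A ^ 4 = A * r * X ^ 2 * (r * A) ^ 3 := by ring
    _ ≤ A * r * X ^ 2 * (4 * (c * P)) ^ 3 := by gcongr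
    _ = 64 * c ^ 3 := by linear_combination 64 * c ^ 3 * hcon
  have htX : 1 ≤ 2 * t * X := by
    rw [mul_assoc, mul_div_cancel₀ _ ht.ne']; linarith
  calc r ^ 4 * A ^ 4 ≤ r ^ 4 * A ^ 4 * (2 * t * X) ^ 2 := by
        nlinarith [one_le_pow₀ (n := 2) htX, show 0 ≤ r ^ 4 * A ^ 4 by positivity]
    _ = 4 * t ^ 2 * (r ^ 4 * X ^ 2 * A ^ 4) := by ring
    _ ≤ 4 * t ^ 2 * (64 * c ^ 3) := by gcongr
    _ = 256 * c ^ 3 * t ^ 2 := by ring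

lemma le_mul_of_norm_relations {A Z S Q P r c : ℝ} (hA : 0 < A) (hA6 : A ≤ 1 / 6) (hS : S ≤ 3)
    (hQ : Q ≤ 3) (hS0 : 0 ≤ S) (hP0 : 0 ≤ P) (hc : 0 < c) (hrc : r ≤ c)
    (hAZ : |A * Z - 1| ≤ A * S) (hZS : Z * S = Q) (hZP : c * Z * P = r) :
    S ≤ 6 * A ∧ P ≤ 2 * A := by
  have hhalf : 1 / 2 ≤ A * Z := by nlinarith [neg_abs_le (A * Z - 1)]
  constructor
  · nlinarith [mul_le_mul_of_nonneg_right hhalf hS0]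
  · nlinarith [mul_le_mul_of_nonneg_right hhalf (mul_nonneg hc.le hP0)]

lemma exists_sqrt_add_lt {ε : ℝ} (hε : 0 < ε) :
    ∃ μ, √(6 * μ) + 3 * μ < ε ∧ 0 < μ ∧ μ ≤ 1 / 2 := by
  have hcont : Continuous fun μ : ℝ => √(6 * μ) + 3 * μ := by fun_prop
  have hE : Tendsto (fun μ : ℝ => √(6 * μ) + 3 * μ) (𝓝[>] 0) (𝓝 0) := by
    simpa using (hcont.tendsto 0).mono_left nhdsWithin_le_nhds
  exact ((hE.eventually (gt_mem_nhds hε)).and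
    (Ioc_mem_nhdsGT (by norm_num : (0 : ℝ) < 1 / 2))).exists

section Solutions

variable {r c : ℝ} {a ζ : ℂ} {η : Fin 3 → ℂ}

lemma norm_le_three_of_norm_lt_one (hη : ∀ j, ‖η j‖ < 1) :
    ‖η 0 + η 1 + η 2‖ ≤ 3 ∧ ‖η 0 * η 1 + η 0 * η 2 + η 1 * η 2‖ ≤ 3 := by
  have h := fun j => (hη j).le
  have hmul : ∀ i j, ‖η i * η j‖ ≤ 1 := fun i j => by
    rw [norm_mul]; exact mul_le_one₀ (h i) (norm_nonneg _) (h j)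
  constructor
  · linarith [norm_add₃_le (a := η 0) (b := η 1) (c := η 2), h 0, h 1, h 2]
  · linarith [norm_add₃_le (a := η 0 * η 1) (b := η 0 * η 2) (c := η 1 * η 2),
      hmul 0 1, hmul 0 2, hmul 1 2]

lemma norm_pow_four_le_of_constraint (hr : 0 < r) (hrc : r < c) (hη : ∀ j, ‖η j‖ < 1)
    (hpoly : ∀ w : ℂ, r * (w - a) + c * w ^ 3 * (1 - (starRingEnd ℂ) a * w) =
      -c * (starRingEnd ℂ) a * (w - ζ) * (w - η 0) * (w - η 1) * (w - η 2))
    {t θ : ℝ} (ht : 0 < t) (ht2 : t ≤ 1 / 2) (ha0 : 0 < ‖a‖)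
    (ha1 : ‖a‖ < 1)
    (hcon : a * r * (((1 - t : ℝ) / t : ℝ) : ℂ) ^ 2 * (η 0 * η 1 * η 2) ^ 3 =
      Complex.exp (6 * θ * Complex.I)) :
    r ^ 4 * ‖a‖ ^ 4 ≤ 256 * c ^ 3 * t ^ 2 := by
  have hc := hr.trans hrc
  obtain ⟨hζ, -, hZP, -⟩ := norm_relations_of_forall_eq hr hc (norm_pos_iff.mp ha0) hpoly
  have hS := (norm_le_three_of_norm_lt_one hη).1
  refine pow_four_le_of_norm_relations ha0.le (norm_nonneg _) hr hc ht ht2 ?_ hZP ?_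
  · nlinarith [le_abs_self (‖a‖ * ‖ζ‖ - 1)]
  · have := congrArg norm hcon
    rw [show (6 * θ * Complex.I : ℂ) = (6 * θ : ℝ) * Complex.I by push_cast; ring,
      Complex.norm_exp_ofReal_mul_I] at this
    rwa [norm_mul, norm_mul, norm_mul, norm_pow, norm_pow, Complex.norm_real,
      Complex.norm_real, Real.norm_of_nonneg hr.le,
      Real.norm_of_nonneg (div_pos (by linarith) ht).le] at this

lemma norm_lt_of_constraint (hr : 0 < r) (hrc : r < c) (hη : ∀ j, ‖η j‖ < 1)
    (hpoly : ∀ w : ℂ, r * (w - a) + c * w ^ 3 * (1 - (starRingEnd ℂ) a * w) =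
      -c * (starRingEnd ℂ) a * (w - ζ) * (w - η 0) * (w - η 1) * (w - η 2))
    {t θ κ : ℝ} (hκ : 0 < κ) (ht : 0 < t) (ht2 : t ≤ 1 / 2)
    (htκ : t < r ^ 4 * κ ^ 4 / (256 * c ^ 3)) (ha0 : 0 < ‖a‖) (ha1 : ‖a‖ < 1)
    (hcon : a * r * (((1 - t : ℝ) / t : ℝ) : ℂ) ^ 2 * (η 0 * η 1 * η 2) ^ 3 =
      Complex.exp (6 * θ * Complex.I)) :
    ‖a‖ < κ := by
  have hc := hr.trans hrc
  have h4 := calc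
    r ^ 4 * ‖a‖ ^ 4 ≤ 256 * c ^ 3 * t ^ 2 :=
      norm_pow_four_le_of_constraint hr hrc hη hpoly ht ht2 ha0 ha1 hcon
    _ ≤ 256 * c ^ 3 * t := by gcongr; nlinarith
    _ < r ^ 4 * κ ^ 4 := (lt_div_iff₀' (by positivity)).mp htκ
  exact (pow_lt_pow_iff_left₀ ha0.le hκ.le four_ne_zero).mp
    (lt_of_mul_lt_mul_left h4 (by positivity))

lemma norm_esymm_le_of_forall_eq (hr : 0 < r) (hrc : r < c) (hη : ∀ j, ‖η j‖ < 1)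
    (hpoly : ∀ w : ℂ, r * (w - a) + c * w ^ 3 * (1 - (starRingEnd ℂ) a * w) =
      -c * (starRingEnd ℂ) a * (w - ζ) * (w - η 0) * (w - η 1) * (w - η 2))
    (ha0 : 0 < ‖a‖) (ha6 : ‖a‖ ≤ 1 / 6) :
    ‖η 0 + η 1 + η 2‖ ≤ 6 * ‖a‖ ∧ ‖η 0 * η 1 * η 2‖ ≤ 2 * ‖a‖ ∧
      ‖η 0 * η 1 + η 0 * η 2 + η 1 * η 2 - r / c‖ ≤ 20 * ‖a‖ ^ 2 := by
  have hc := hr.trans hrc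
  obtain ⟨hζ, hZS, hZP, he₂⟩ := norm_relations_of_forall_eq hr hc (norm_pos_iff.mp ha0) hpoly
  obtain ⟨hS, hQ⟩ := norm_le_three_of_norm_lt_one hη
  obtain ⟨he₁, he₃⟩ := le_mul_of_norm_relations ha0 ha6 hS hQ (norm_nonneg _) (norm_nonneg _) hc
    hrc.le hζ hZS hZP
  refine ⟨he₁, he₃, he₂.trans ?_⟩
  calc ‖a‖ * (‖η 0 + η 1 + η 2‖ * ‖η 0 * η 1 + η 0 * η 2 + η 1 * η 2‖ + ‖η 0 * η 1 * η 2‖)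
      ≤ ‖a‖ * (6 * ‖a‖ * 3 + 2 * ‖a‖) := by gcongr
    _ = 20 * ‖a‖ ^ 2 := by ring

end Solutions

/-- Asymptotics of Lemma `h0a` in the case `I = ∅`: as `t → 0`, any solution of the
factorization identity together with the boundary constraint
`a·r·((1−t)/t)²·(η₀η₁η₂)³ = e^{6iθ}` satisfies, after a permutation of the indices,
`a = O(t^{1/2})`, `η₀ = O(t^{1/2})`, `η₁ → i√(r/c)`, `η₂ → −i√(r/c)`. -/
theorem stmt_3 (r c : ℝ) (hr : 0 < r) (hrc : r < c) :
    ∀ ε > 0, ∃ t₀ ∈ Set.Ioo (0 : ℝ) 1, ∀ t ∈ Set.Ioo (0 : ℝ) t₀, ∀ θ : ℝ,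
      ∀ a : ℂ, ∀ η : Fin 3 → ℂ, ∀ ζ : ℂ,
        0 < ‖a‖ → ‖a‖ < 1 →
        (∀ j, ‖η j‖ < 1) → 1 < ‖ζ‖ →
        (∀ w : ℂ,
          r * (w - a) + c * w ^ 3 * (1 - (starRingEnd ℂ) a * w) =
            -c * (starRingEnd ℂ) a * (w - ζ) * (w - η 0) * (w - η 1) * (w - η 2)) →
        a * r * (((1 - t : ℝ) / t : ℝ) : ℂ) ^ 2 * (η 0 * η 1 * η 2) ^ 3 =
          Complex.exp (6 * θ * Complex.I) →
        ∃ σ : Equiv.Perm (Fin 3),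
          ‖a‖ < ε ∧
          ‖η (σ 0)‖ < ε ∧
          ‖η (σ 1) - Complex.I * Real.sqrt (r / c)‖ < ε ∧
          ‖η (σ 2) + Complex.I * Real.sqrt (r / c)‖ < ε := by
  intro ε hε
  have hc := hr.trans hrc
  obtain ⟨μ, hμE, hμ0, hμ1⟩ := exists_sqrt_add_lt hε
  have hμ3 : μ ^ 3 ≤ μ / 4 := by nlinarith [show μ ^ 2 ≤ 1 / 4 by nlinarith]
  have hμε : μ < ε := by nlinarith [Real.sqrt_nonneg (6 * μ)]
  set t₀ := min (1 / 2) (r ^ 4 * (μ ^ 3 / 2) ^ 4 / (256 * c ^ 3))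
  refine ⟨t₀, ⟨lt_min (by norm_num) (by positivity), (min_le_left _ _).trans_lt (by norm_num)⟩,
    fun t ht θ a η ζ ha0 ha1 hη _ hpoly hcon => ?_⟩
  have haμ : ‖a‖ < μ ^ 3 / 2 := norm_lt_of_constraint hr hrc hη hpoly (by positivity) ht.1
    (ht.2.le.trans (min_le_left _ _)) (ht.2.trans_le (min_le_right _ _)) ha0 ha1 hcon
  obtain ⟨he₁, he₃, he₂⟩ := norm_esymm_le_of_forall_eq hr hrc hη hpoly ha0 (by linarith)
  have hz : (Complex.I * Real.sqrt (r / c)) ^ 2 = -(r / c) := by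
    rw [mul_pow, Complex.I_sq, ← Complex.ofReal_pow, Real.sq_sqrt (div_pos hr hc).le]
    push_cast; ring
  obtain ⟨σ, h₀, h₁, h₂⟩ := exists_perm_roots_near (z := Complex.I * Real.sqrt (r / c)) hμ0
    (by linarith) (fun j => (hη j).le) (by linarith) (by rw [hz, ← sub_eq_add_neg]; nlinarith)
    (by linarith)
  exact ⟨σ, by linarith, h₀.trans_lt hμε, h₁.trans_lt hμE, h₂.trans_lt hμE⟩
end

section
/- Let 0 < r < c be real numbers. There exists t₀ ∈ (0,1) such that for all t ∈ (0, t₀) and all λ ∈ ℂ with |λ| = 1, the degree 4 polynomial p(z) = (z² − c)² + t·z³·(λ − z) has exactly two roots, counted with multiplicity, in the open right half-plane {z ∈ ℂ : Re z > 0}. -/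
/-!
Every root `z` satisfies `‖z² - c‖² = t ‖z‖³ ‖λ - z‖`, and the roots are uniformly bounded, so for
small `t` each root lies within `√c / 4` of `√c` or of `-√c`. The roots of the right half-plane are
then those near `√c`. If there are `k` of them, the real parts of the four roots add up to
`(2k - 4)√c` up to an error `≤ √c`. By Vieta the sum of the roots is `-tλ / (1 - t)`, so it is
`O(t)`, and this forces `k = 2`.
-/

open Polynomial

theorem norm_sub_le_or_norm_add_le {E : Type*} [NormedAddCommGroup E] [NormedSpace ℝ E]
    {z w : E} {ρ : ℝ} (hw : w ≠ 0) (h : ‖z - w‖ * ‖z + w‖ ≤ ρ * ‖w‖) :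
    ‖z - w‖ ≤ ρ ∨ ‖z + w‖ ≤ ρ := by
  have hw' : 0 < ‖w‖ := norm_pos_iff.mpr hw
  rcases le_or_gt ‖w‖ ‖z + w‖ with hle | hlt
  · left
    nlinarith [norm_nonneg (z - w)]
  · right
    have h2w : 2 * ‖w‖ ≤ ‖z + w‖ + ‖z - w‖ := by
      calc 2 * ‖w‖ = ‖(z + w) - (z - w)‖ := by
            rw [show (z + w) - (z - w) = (2 : ℝ) • w by rw [two_smul]; abel, norm_smul,
              Real.norm_two]
        _ ≤ ‖z + w‖ + ‖z - w‖ := norm_sub_le _ _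
    nlinarith [norm_nonneg (z + w)]

theorem abs_sum_sub_card_filter_pos_mul_le {s δ : ℝ} (hδ : δ < s) (m : Multiset ℝ)
    (hm : ∀ x ∈ m, |x - s| ≤ δ ∨ |x + s| ≤ δ) :
    |m.sum - (2 * (m.filter (0 < ·)).card - m.card) * s| ≤ m.card * δ := by
  induction m using Multiset.induction_on with
  | empty => simp
  | cons x m ih =>
    have ih := ih fun y hy => hm y (Multiset.mem_cons_of_mem hy)
    rw [Multiset.sum_cons, Multiset.filter_cons, Multiset.card_add, Multiset.card_cons]
    rcases hm x (Multiset.mem_cons_self x m) with hx | hx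
    · have hpos : 0 < x := by linarith [abs_le.mp hx]
      rw [if_pos hpos, Multiset.card_singleton]
      push_cast
      calc _ = |(x - s) + (m.sum - (2 * (m.filter (0 < ·)).card - m.card) * s)| := by ring_nf
        _ ≤ _ := (abs_add_le _ _).trans (by linarith)
    · have hneg : ¬ 0 < x := by linarith [abs_le.mp hx]
      rw [if_neg hneg, Multiset.card_zero]
      push_cast
      calc _ = |(x + s) + (m.sum - (2 * (m.filter (0 < ·)).card - m.card) * s)| := by ring_nf
        _ ≤ _ := (abs_add_le _ _).trans (by linarith)

theorem le_of_pow_four_le {a c : ℝ} (hc : 0 ≤ c)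
    (h : a ^ 4 ≤ a ^ 3 + 4 * c * a ^ 2 + 2 * c ^ 2) : a ≤ 1 + 4 * c + 2 * c ^ 2 := by
  by_contra! hlt
  have ha1 : 1 < a := by nlinarith
  nlinarith [pow_le_pow_right₀ ha1.le (show 2 ≤ 3 by norm_num),
    pow_le_pow_right₀ ha1.le (show 0 ≤ 3 by norm_num),
    mul_lt_mul_of_pos_right hlt (pow_pos (by linarith : (0 : ℝ) < a) 3)]

noncomputable def perturbedQuartic (c t : ℝ) (lam : ℂ) : ℂ[X] :=
  (X ^ 2 - C (c : ℂ)) ^ 2 + C (t : ℂ) * X ^ 3 * (C lam - X)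

namespace perturbedQuartic

section Coefficients

variable (c : ℝ) {t : ℝ} (lam : ℂ)

theorem eq_sum_monomials : perturbedQuartic c t lam =
    C (1 - t : ℂ) * X ^ 4 + C (t * lam) * X ^ 3 + C (-2 * c : ℂ) * X ^ 2 + C ((c : ℂ) ^ 2) := by
  simp only [perturbedQuartic, map_sub, map_mul, map_neg, map_pow, map_one, map_ofNat]
  ring

theorem natDegree_eq (ht : t ≠ 1) : (perturbedQuartic c t lam).natDegree = 4 := by
  rw [eq_sum_monomials]
  compute_degree!
  exact sub_ne_zero.mpr ht.symm

theorem leadingCoeff_eq (ht : t ≠ 1) : (perturbedQuartic c t lam).leadingCoeff = 1 - t := by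
  rw [leadingCoeff, natDegree_eq c lam ht, eq_sum_monomials]
  simp only [coeff_add, coeff_C_mul, coeff_X_pow, coeff_C]
  norm_num

theorem nextCoeff_eq (ht : t ≠ 1) : (perturbedQuartic c t lam).nextCoeff = t * lam := by
  rw [nextCoeff, natDegree_eq c lam ht, eq_sum_monomials]
  simp only [coeff_add, coeff_C_mul, coeff_X_pow, coeff_C]
  norm_num

theorem card_roots (ht : t ≠ 1) : (perturbedQuartic c t lam).roots.card = 4 := by
  rw [IsAlgClosed.card_roots_eq_natDegree, natDegree_eq c lam ht]

theorem sum_roots (ht : t ≠ 1) :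
    (1 - t : ℂ) * (perturbedQuartic c t lam).roots.sum = -(t * lam) := by
  have := (IsAlgClosed.splits (perturbedQuartic c t lam)).nextCoeff_eq_neg_sum_roots_mul_leadingCoeff
  rw [nextCoeff_eq c lam ht, leadingCoeff_eq c lam ht] at this
  linear_combination this

theorem mem_roots_iff (ht : t ≠ 1) {z : ℂ} :
    z ∈ (perturbedQuartic c t lam).roots ↔ (z ^ 2 - c) ^ 2 + t * z ^ 3 * (lam - z) = 0 := by
  have hne : perturbedQuartic c t lam ≠ 0 := by
    intro h
    simpa [h] using natDegree_eq c lam ht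
  rw [mem_roots hne, IsRoot.def]
  simp [perturbedQuartic]

end Coefficients

variable {c t : ℝ} {lam z : ℂ}

theorem norm_le_of_mem_roots (hc : 0 ≤ c) (ht0 : 0 ≤ t) (ht : t ≤ 1 / 2) (hlam : ‖lam‖ = 1)
    (hz : z ∈ (perturbedQuartic c t lam).roots) : ‖z‖ ≤ 1 + 4 * c + 2 * c ^ 2 := by
  have hz' : ((1 - t : ℝ) : ℂ) * z ^ 4 =
      -((t : ℂ) * lam * z ^ 3) + 2 * (c : ℂ) * z ^ 2 - (c : ℂ) ^ 2 := by
    push_cast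
    linear_combination (mem_roots_iff c lam (by linarith)).mp hz
  have hnorm : (1 - t) * ‖z‖ ^ 4 ≤ t * ‖z‖ ^ 3 + 2 * c * ‖z‖ ^ 2 + c ^ 2 := by
    calc (1 - t) * ‖z‖ ^ 4 = ‖((1 - t : ℝ) : ℂ) * z ^ 4‖ := by
          rw [norm_mul, norm_pow, Complex.norm_of_nonneg (by linarith)]
      _ ≤ ‖(t : ℂ) * lam * z ^ 3‖ + ‖2 * (c : ℂ) * z ^ 2‖ + ‖(c : ℂ) ^ 2‖ := by
          rw [hz']
          exact (norm_sub_le _ _).trans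
            (by gcongr; exact (norm_add_le _ _).trans (by rw [norm_neg]))
      _ = t * ‖z‖ ^ 3 + 2 * c * ‖z‖ ^ 2 + c ^ 2 := by
          simp only [norm_mul, norm_pow, Complex.norm_of_nonneg ht0, Complex.norm_of_nonneg hc,
            hlam, Complex.norm_two]
          ring
  refine le_of_pow_four_le hc ?_
  nlinarith [pow_nonneg (norm_nonneg z) 3, pow_nonneg (norm_nonneg z) 4]

theorem norm_sq_sub_sq_le_of_mem_roots (hc : 0 ≤ c) (ht0 : 0 ≤ t) (ht : t ≤ 1 / 2)
    (hlam : ‖lam‖ = 1) (hz : z ∈ (perturbedQuartic c t lam).roots) :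
    ‖z ^ 2 - c‖ ^ 2 ≤ t * (2 * (1 + 4 * c + 2 * c ^ 2) ^ 4) := by
  set M := 1 + 4 * c + 2 * c ^ 2
  have hM : 1 ≤ M := by nlinarith
  have hzM : ‖z‖ ≤ M := norm_le_of_mem_roots hc ht0 ht hlam hz
  have hlamz : ‖lam - z‖ ≤ 2 * M := (norm_sub_le _ _).trans (by linarith)
  have hroot := (mem_roots_iff c lam (by linarith)).mp hz
  calc ‖z ^ 2 - c‖ ^ 2 = t * (‖z‖ ^ 3 * ‖lam - z‖) := by
        rw [← norm_pow, show (z ^ 2 - c) ^ 2 = -(t * z ^ 3 * (lam - z)) by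
            linear_combination hroot,
          norm_neg, norm_mul, norm_mul, norm_pow, Complex.norm_of_nonneg ht0, mul_assoc]
    _ ≤ t * (M ^ 3 * (2 * M)) := by gcongr
    _ = t * (2 * M ^ 4) := by ring

theorem re_near_sqrt_of_mem_roots (hc : 0 < c) (ht0 : 0 ≤ t) (ht : t ≤ 1 / 2)
    (htc : t * (2 * (1 + 4 * c + 2 * c ^ 2) ^ 4) ≤ c ^ 2 / 16) (hlam : ‖lam‖ = 1)
    (hz : z ∈ (perturbedQuartic c t lam).roots) :
    |z.re - √c| ≤ √c / 4 ∨ |z.re + √c| ≤ √c / 4 := by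
  have hs : 0 < √c := Real.sqrt_pos.mpr hc
  have hsq : ‖z ^ 2 - c‖ ≤ c / 4 := by
    have := norm_sq_sub_sq_le_of_mem_roots hc.le ht0 ht hlam hz
    nlinarith [norm_nonneg (z ^ 2 - c)]
  have hfactor : ‖z - (√c : ℂ)‖ * ‖z + (√c : ℂ)‖ ≤ √c / 4 * ‖(√c : ℂ)‖ := by
    have hsqrt : ((√c : ℝ) : ℂ) ^ 2 = c := by rw [← Complex.ofReal_pow, Real.sq_sqrt hc.le]
    rw [← norm_mul, Complex.norm_of_nonneg hs.le,
      show (z - √c) * (z + √c) = z ^ 2 - c by linear_combination -hsqrt]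
    linarith [Real.mul_self_sqrt hc.le]
  refine (norm_sub_le_or_norm_add_le (by exact_mod_cast hs.ne') hfactor).imp ?_ ?_ <;>
    refine le_trans ?_
  · simpa using Complex.abs_re_le_norm (z - √c)
  · simpa using Complex.abs_re_le_norm (z + √c)

theorem abs_sum_re_roots_le (ht0 : 0 ≤ t) (ht : t ≤ 1 / 2) (hlam : ‖lam‖ = 1) :
    |((perturbedQuartic c t lam).roots.map Complex.re).sum| ≤ 2 * t := by
  set S := (perturbedQuartic c t lam).roots.sum
  have hS : ((1 - t : ℝ) : ℂ) * S = -(t * lam) := by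
    push_cast
    exact sum_roots c lam (by linarith)
  have hnorm : (1 - t) * ‖S‖ = t := by
    have := congrArg norm hS
    rwa [norm_mul, norm_neg, norm_mul, Complex.norm_of_nonneg (by linarith),
      Complex.norm_of_nonneg ht0, hlam, mul_one] at this
  calc |((perturbedQuartic c t lam).roots.map Complex.re).sum| = |S.re| :=
        congrArg abs (map_multiset_sum Complex.reAddGroupHom _).symm
    _ ≤ ‖S‖ := Complex.abs_re_le_norm S
    _ ≤ 2 * t := by nlinarith [norm_nonneg S]

end perturbedQuartic

/-- Computation `β · [D₅] = 2` in Lemma `HomTab`: for `t` small, the polynomial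
`(z² − c)² + t·z³·(λ − z)` has exactly two roots (with multiplicity) in the open
right half-plane. -/
theorem stmt_5 (r c : ℝ) (hr : 0 < r) (hrc : r < c) :
    ∃ t₀ ∈ Set.Ioo (0 : ℝ) 1, ∀ t ∈ Set.Ioo (0 : ℝ) t₀, ∀ lam : ℂ, ‖lam‖ = 1 →
      (((X ^ 2 - C (c : ℂ)) ^ 2 + C (t : ℂ) * X ^ 3 * (C lam - X)).roots.filter
        (fun z : ℂ => 0 < z.re)).card = 2 := by
  have hc : 0 < c := hr.trans hrc
  have hs : 0 < √c := Real.sqrt_pos.mpr hc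
  set K := 2 * (1 + 4 * c + 2 * c ^ 2) ^ 4
  refine ⟨min (1 / 2) (min (c ^ 2 / 16 / K) (√c / 2)),
    ⟨by positivity, (min_le_left _ _).trans_lt (by norm_num)⟩, ?_⟩
  rintro t ⟨ht0, htt₀⟩ lam hlam
  obtain ⟨ht, htK, hts⟩ : t < 1 / 2 ∧ t < c ^ 2 / 16 / K ∧ t < √c / 2 := by
    simpa only [lt_min_iff] using htt₀
  have htc : t * K ≤ c ^ 2 / 16 := ((lt_div_iff₀ (by positivity)).mp htK).le
  change ((perturbedQuartic c t lam).roots.filter (fun z : ℂ => 0 < z.re)).card = 2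
  have hsum := perturbedQuartic.abs_sum_re_roots_le (c := c) ht0.le ht.le hlam
  set m := (perturbedQuartic c t lam).roots.map Complex.re
  have hcard : m.card = 4 := by
    rw [Multiset.card_map, perturbedQuartic.card_roots c lam (by linarith)]
  have hnear : ∀ x ∈ m, |x - √c| ≤ √c / 4 ∨ |x + √c| ≤ √c / 4 := by
    simp only [m, Multiset.mem_map]
    rintro _ ⟨z, hz, rfl⟩
    exact perturbedQuartic.re_near_sqrt_of_mem_roots hc ht0.le ht.le htc hlam hz
  have hcount := abs_sum_sub_card_filter_pos_mul_le (by linarith) m hnear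
  rw [hcard] at hcount
  rw [show ((perturbedQuartic c t lam).roots.filter (fun z : ℂ => 0 < z.re)).card
      = (m.filter (0 < ·)).card by simp only [m, Multiset.filter_map, Multiset.card_map]; rfl]
  push_cast at hcount
  have hk1 : (1 : ℝ) < (m.filter (0 < ·)).card := by
    nlinarith [abs_le.mp hcount, abs_le.mp hsum]
  have hk3 : ((m.filter (0 < ·)).card : ℝ) < 3 := by
    nlinarith [abs_le.mp hcount, abs_le.mp hsum]
  norm_cast at hk1 hk3
  omega
end

section
/- Let K ∈ ℂ with K ≠ 0, and set R = 2·|K|^{−1/4}. There exists δ > 0 such that for every function g : ℂ → ℂ that is complex-differentiable on the open ball of radius R centered at 0 and satisfies |g(a)| ≤ δ and |g′(a)| ≤ δ for all a with |a| < R, the set {a ∈ ℂ : |a| < R and K·a⁴ + g(a) = 1} has exactly 4 elements. -/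
/-!
Write `b` for a fourth root of `K⁻¹`. The substitution `a = b z` turns the equation into
`z⁴ + h(z) = 1` on the ball of radius `2`, where `h(z) = g(bz)` and `h'` are still uniformly
small, so it suffices to treat `K = 1`. Near each fourth root of unity `ω`, the Newton-type map
`z ↦ (z⁴ + h z)/(4ω³)` differs from the identity by a contraction, so the equation has exactly one
solution within `1/8` of `ω`. Conversely every solution satisfies `|z⁴ - 1| = |h z| ≤ (1/8)⁴`, so it
lies within `1/8` of one of the four roots, and these discs are pairwise disjoint.
-/

open Complex Metric Set
open scoped NNReal

theorem existsUnique_mem_closedBall_of_lipschitzOnWith_sub_id {E : Type*} [NormedAddCommGroup E]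
    [NormedSpace ℝ E] [CompleteSpace E] [Nontrivial E] {φ : E → E} {a y : E} {r : ℝ} {c : ℝ≥0}
    (hc : c < 1) (hr : 0 ≤ r) (hφ : LipschitzOnWith c (φ - id) (closedBall a r))
    (hy : dist y (φ a) ≤ (1 - c) * r) :
    ∃! x, x ∈ closedBall a r ∧ φ x = y := by
  set f' := ContinuousLinearEquiv.refl ℝ E
  have hφ' : ApproximatesLinearOn φ (f' : E →L[ℝ] E) (closedBall a r) c :=
    ApproximatesLinearOn.approximatesLinearOn_iff_lipschitzOnWith.2 hφ
  have hN : ‖(f'.symm : E →L[ℝ] E)‖₊ = 1 := ContinuousLinearMap.nnnorm_id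
  obtain ⟨x, hx, rfl⟩ := hφ'.surjOn_closedBall_of_nonlinearRightInverse
    f'.toNonlinearRightInverse hr subset_rfl
    (by simpa [ContinuousLinearEquiv.toNonlinearRightInverse, hN] using hy)
  exact ⟨x, ⟨hx, rfl⟩, fun x' hx' => hφ'.injOn (Or.inr (by simpa [hN])) hx'.1 hx hx'.2⟩

theorem I_pow_pow_four (k : ℕ) : (I ^ k) ^ 4 = 1 := by
  rw [← pow_mul, mul_comm, pow_mul, I_pow_four, one_pow]

theorem prod_sub_I_pow (z : ℂ) : ∏ k : Fin 4, (z - I ^ (k : ℕ)) = z ^ 4 - 1 := by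
  simp only [Fin.prod_univ_four, Fin.isValue, Fin.coe_ofNat_eq_mod, Nat.zero_mod, pow_zero,
    Nat.one_mod, pow_one, Nat.reduceMod, I_sq, sub_neg_eq_add, Nat.mod_succ, I_pow_three]
  linear_combination (1 - z ^ 2) * I_sq

theorem one_le_norm_I_pow_sub_I_pow {j k : Fin 4} (hjk : j ≠ k) :
    1 ≤ ‖I ^ (j : ℕ) - I ^ (k : ℕ)‖ := by
  have one_le_norm {z : ℂ} (hz : 1 ≤ |z.re| ∨ 1 ≤ |z.im|) : 1 ≤ ‖z‖ :=
    (le_max_iff.2 hz).trans (max_le (abs_re_le_norm z) (abs_im_le_norm z))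
  fin_cases j <;> fin_cases k <;> first
    | exact absurd rfl hjk
    | (apply one_le_norm; norm_num [pow_succ])

theorem exists_norm_sub_I_pow_le {z : ℂ} {r : ℝ} (hr : 0 < r) (hz : ‖z ^ 4 - 1‖ ≤ r ^ 4) :
    ∃ k : Fin 4, ‖z - I ^ (k : ℕ)‖ ≤ r := by
  by_contra! hfar
  have : ∏ _k : Fin 4, r < ∏ k : Fin 4, ‖z - I ^ (k : ℕ)‖ :=
    Finset.prod_lt_prod_of_nonempty (fun _ _ => hr) (fun k _ => hfar k) Finset.univ_nonempty
  rw [← norm_prod, prod_sub_I_pow, Finset.prod_const, Finset.card_univ, Fintype.card_fin] at this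
  exact this.not_ge hz

theorem norm_pow_three_sub_pow_three_le {z ω : ℂ} (hω : ‖ω‖ = 1) (hz : ‖z - ω‖ ≤ 1 / 8) :
    ‖z ^ 3 - ω ^ 3‖ ≤ 1 / 2 := by
  have hz' : ‖z‖ ≤ 9 / 8 := by
    calc ‖z‖ = ‖(z - ω) + ω‖ := by rw [sub_add_cancel]
      _ ≤ 9 / 8 := (norm_add_le _ _).trans (by linarith)
  calc ‖z ^ 3 - ω ^ 3‖ = ‖z - ω‖ * ‖z ^ 2 + z * ω + ω ^ 2‖ := by
        rw [← norm_mul]; ring_nf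
    _ ≤ 1 / 8 * ((9 / 8) ^ 2 + 9 / 8 * 1 + 1 ^ 2) := by
        gcongr
        refine (norm_add₃_le).trans ?_
        simp only [norm_pow, norm_mul, hω]
        gcongr
    _ ≤ 1 / 2 := by norm_num

theorem closedBall_subset_ball_two {ω : ℂ} (hω : ‖ω‖ = 1) : closedBall ω (1 / 8) ⊆ ball 0 2 :=
  closedBall_subset_ball' (by rw [dist_zero_right, hω]; norm_num)

theorem lipschitzOnWith_newton_sub_id {h : ℂ → ℂ} (hh : DifferentiableOn ℂ h (ball 0 2))
    (hbound : ∀ z : ℂ, ‖z‖ < 2 → ‖h z‖ ≤ 1 / 4096 ∧ ‖deriv h z‖ ≤ 1 / 4096)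
    {ω : ℂ} (hω : ω ^ 4 = 1) :
    LipschitzOnWith (3 / 4) ((fun z => ω / 4 * (z ^ 4 + h z)) - id) (closedBall ω (1 / 8)) := by
  have hω1 : ‖ω‖ = 1 := norm_eq_one_of_pow_eq_one hω (by norm_num)
  refine (convex_closedBall _ _).lipschitzOnWith_of_nnnorm_hasDerivWithin_le
    (f' := fun z => ω * (z ^ 3 - ω ^ 3) + ω / 4 * deriv h z) (fun z hz => ?_) (fun z hz => ?_)
  · have hz2 := closedBall_subset_ball_two hω1 hz
    have hhz := (hh.differentiableAt (isOpen_ball.mem_nhds hz2)).hasDerivAt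
    have := ((((hasDerivAt_pow 4 z).add hhz).const_mul (ω / 4)).sub (hasDerivAt_id z))
    refine (this.congr_deriv ?_).hasDerivWithinAt
    linear_combination hω
  · have hz2 : ‖z‖ < 2 := by simpa using closedBall_subset_ball_two hω1 hz
    rw [← NNReal.coe_le_coe, coe_nnnorm]
    calc ‖ω * (z ^ 3 - ω ^ 3) + ω / 4 * deriv h z‖
        ≤ ‖z ^ 3 - ω ^ 3‖ + 1 / 4 * ‖deriv h z‖ := by
          refine (norm_add_le _ _).trans_eq ?_
          simp [hω1]
      _ ≤ 1 / 2 + 1 / 4 * (1 / 4096) := by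
          gcongr
          · exact norm_pow_three_sub_pow_three_le hω1 (by simpa [dist_eq] using hz)
          · exact (hbound z hz2).2
      _ ≤ ((3 / 4 : ℝ≥0) : ℝ) := by norm_num

theorem existsUnique_pow_four_add_eq_one_near {h : ℂ → ℂ} (hh : DifferentiableOn ℂ h (ball 0 2))
    (hbound : ∀ z : ℂ, ‖z‖ < 2 → ‖h z‖ ≤ 1 / 4096 ∧ ‖deriv h z‖ ≤ 1 / 4096)
    {ω : ℂ} (hω : ω ^ 4 = 1) :
    ∃! z, z ∈ closedBall ω (1 / 8) ∧ z ^ 4 + h z = 1 := by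
  have hω0 : ω ≠ 0 := by rintro rfl; norm_num at hω
  have hω1 : ‖ω‖ = 1 := norm_eq_one_of_pow_eq_one hω (by norm_num)
  have hsolve (z : ℂ) : ω / 4 * (z ^ 4 + h z) = ω / 4 ↔ z ^ 4 + h z = 1 := by
    rw [mul_eq_left₀ (by simpa using hω0)]
  have hcenter : dist (ω / 4) (ω / 4 * (ω ^ 4 + h ω)) ≤ (1 - (3 / 4 : ℝ≥0)) * (1 / 8) := by
    rw [hω, dist_eq, show ω / 4 - ω / 4 * (1 + h ω) = -(ω / 4 * h ω) by ring, norm_neg, norm_mul,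
      norm_div, hω1, norm_ofNat]
    push_cast
    linarith [(hbound ω (by rw [hω1]; norm_num)).1]
  simpa only [hsolve] using existsUnique_mem_closedBall_of_lipschitzOnWith_sub_id (by norm_num)
    (by norm_num) (lipschitzOnWith_newton_sub_id hh hbound hω) hcenter

theorem ncard_setOf_pow_four_add_eq_one {h : ℂ → ℂ} (hh : DifferentiableOn ℂ h (ball 0 2))
    (hbound : ∀ z : ℂ, ‖z‖ < 2 → ‖h z‖ ≤ 1 / 4096 ∧ ‖deriv h z‖ ≤ 1 / 4096) :
    {z : ℂ | ‖z‖ < 2 ∧ z ^ 4 + h z = 1}.ncard = 4 := by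
  choose x hx hx_unique using fun k : Fin 4 ↦
    existsUnique_pow_four_add_eq_one_near hh hbound (I_pow_pow_four k)
  have hx_inj : Function.Injective x := by
    intro j k hjk
    by_contra hne
    have hclose : dist (I ^ (j : ℕ)) (I ^ (k : ℕ)) ≤ 1 / 8 + 1 / 8 :=
      (dist_triangle _ (x k) _).trans
        (add_le_add (hjk ▸ mem_closedBall'.1 (hx j).1) (mem_closedBall.1 (hx k).1))
    rw [dist_eq] at hclose
    linarith [one_le_norm_I_pow_sub_I_pow hne]
  have hx_range : {z : ℂ | ‖z‖ < 2 ∧ z ^ 4 + h z = 1} = range x := by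
    ext z
    constructor
    · rintro ⟨hz2, hz⟩
      have hnear : ‖z ^ 4 - 1‖ ≤ (1 / 8) ^ 4 := by
        rw [show z ^ 4 - 1 = -h z by linear_combination hz, norm_neg]
        exact (hbound z hz2).1.trans (by norm_num)
      obtain ⟨k, hk⟩ := exists_norm_sub_I_pow_le (by norm_num) hnear
      exact ⟨k, (hx_unique k z ⟨mem_closedBall_iff_norm.2 hk, hz⟩).symm⟩
    · rintro ⟨k, rfl⟩
      have hk : ‖I ^ (k : ℕ)‖ = 1 := by simp
      exact ⟨mem_ball_zero_iff.1 (closedBall_subset_ball_two hk (hx k).1), (hx k).2⟩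
  rw [hx_range, ncard_range_of_injective hx_inj, Nat.card_eq_fintype_card, Fintype.card_fin]

theorem norm_eq_rpow_of_pow_four_eq_inv {K b : ℂ} (hb : b ^ 4 = K⁻¹) :
    ‖b‖ = ‖K‖ ^ (-(1 / 4) : ℝ) := by
  have h4 : ‖b‖ ^ 4 = ‖K‖⁻¹ := by rw [← norm_pow, hb, norm_inv]
  rw [Real.rpow_neg (norm_nonneg _), ← Real.inv_rpow (norm_nonneg _), ← h4, ← Real.rpow_natCast,
    ← Real.rpow_mul (norm_nonneg b)]
  norm_num

/-- Perturbation step of Propositions `m=2` and `m=1`: if `g` is holomorphic on the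
ball of radius `R = 2·|K|^{−1/4}` with `|g|` and `|g′|` uniformly small there, then
the equation `K·a⁴ + g(a) = 1` has exactly 4 solutions in that ball. -/
theorem stmt_6 (K : ℂ) (hK : K ≠ 0) :
    ∃ δ > (0 : ℝ), ∀ g : ℂ → ℂ,
      DifferentiableOn ℂ g (Metric.ball 0 (2 * ‖K‖ ^ (-(1/4) : ℝ))) →
      (∀ a : ℂ, ‖a‖ < 2 * ‖K‖ ^ (-(1/4) : ℝ) →
        ‖g a‖ ≤ δ ∧ ‖deriv g a‖ ≤ δ) →
      {a : ℂ | ‖a‖ < 2 * ‖K‖ ^ (-(1/4) : ℝ) ∧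
        K * a ^ 4 + g a = 1}.ncard = 4 := by
  obtain ⟨b, hb⟩ := IsAlgClosed.exists_pow_nat_eq K⁻¹ four_pos
  have hKb : K * b ^ 4 = 1 := by rw [hb, mul_inv_cancel₀ hK]
  have hb0 : b ≠ 0 := by rintro rfl; simp at hKb
  have hbpos : 0 < ‖b‖ := norm_pos_iff.2 hb0
  refine ⟨min 1 ‖b‖⁻¹ / 4096, by positivity, fun g hg hgbound => ?_⟩
  rw [← norm_eq_rpow_of_pow_four_eq_inv hb] at hg hgbound ⊢
  have hmaps : MapsTo (b * ·) (ball 0 2) (ball 0 (2 * ‖b‖)) := fun z hz => by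
    simpa [norm_mul, mul_comm] using mul_lt_mul_of_pos_left (mem_ball_zero_iff.1 hz) hbpos
  have hpre : (b * ·) ⁻¹' {a : ℂ | ‖a‖ < 2 * ‖b‖ ∧ K * a ^ 4 + g a = 1} =
      {z : ℂ | ‖z‖ < 2 ∧ z ^ 4 + g (b * z) = 1} := by
    ext z
    simp [mul_pow, ← mul_assoc, hKb, mul_comm (‖b‖), hbpos]
  rw [← ncard_preimage_of_injective_subset_range (mul_right_injective₀ hb0)
    (fun a _ => ⟨a / b, mul_div_cancel₀ a hb0⟩), hpre]
  refine ncard_setOf_pow_four_add_eq_one (hg.comp (differentiableOn_id.const_mul b) hmaps)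
    fun z hz => ?_
  obtain ⟨hgz, hg'z⟩ := hgbound (b * z) (mem_ball_zero_iff.1 (hmaps (mem_ball_zero_iff.2 hz)))
  rw [deriv_comp_mul_left, smul_eq_mul, norm_mul]
  refine ⟨hgz.trans (by gcongr; exact min_le_left _ _), ?_⟩
  calc ‖b‖ * ‖deriv g (b * z)‖ ≤ ‖b‖ * (‖b‖⁻¹ / 4096) := by
        gcongr; exact hg'z.trans (by gcongr; exact min_le_right _ _)
    _ = 1 / 4096 := by field_simp
end

section
/- Let 0 < r < c be real numbers. There exists t₀ ∈ (0,1) such that for every t ∈ (0, t₀) and every θ ∈ ℝ, the set of a ∈ ℂ with 0 < |a| < 1 for which there exist η₀, η₁, η₂ ∈ ℂ with |ηⱼ| < 1 for each j and ζ ∈ ℂ with |ζ| > 1 satisfying both the polynomial identity r(w − a) + c·w³·(1 − conj(a)·w) = −c·conj(a)·(w − ζ)(w − η₀)(w − η₁)(w − η₂) for all w ∈ ℂ, and the constraint a·r·((1−t)/t)²·(η₀η₁η₂)³ = e^{6iθ}, has exactly four elements. -/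
/-!
Write `b = conj a`. Comparing coefficients in the factorization of `Ξ` gives
`b (ζ + η₀ + η₁ + η₂) = 1` and `c (b ζ) η₀ η₁ η₂ = r a`, so with `v = b ζ` and `q = (1 - t) / t`
the constraint (cond2) becomes `a⁴ = κ e^{6iθ} v³` with `κ = c³ / (r⁴ q²)`, while `Ξ(ζ) = 0`
becomes the fixed-point equation `v = 1 + (r / c) (p² - a p³)`, `p = b / v`.

For small `t` the constant `κ` is small, and this forces `|a|` to be small. Then a root of `Ξ`
outside the unit disc has `b w` close to `1`, and the first Vieta relation leaves room for only one
of them: the three `ηⱼ` lie in the disc and `v` lies near `1`. So `a = u β v^{3/4}` with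
`β⁴ = κ e^{6iθ}` and `u⁴ = 1`. For each `u`, substituting this `a` turns the fixed-point equation
into a contraction of the closed ball of radius `1/10` about `1`, which has exactly one fixed
point. Each fourth root of unity `u` therefore gives exactly one solution, and distinct `u` give
distinct solutions because the solution lies within `|β| / 10` of `u β`.
-/

open ComplexConjugate Metric Set Filter Topology

theorem eq_of_pow_four_eq_one_of_norm_sub_lt_one {u u' : ℂ} (hu : u ^ 4 = 1) (hu' : u' ^ 4 = 1)
    (h : ‖u - u'‖ < 1) : u = u' := by
  have hu'0 : u' ≠ 0 := by rintro rfl; norm_num at hu'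
  have hnorm : ‖u'‖ = 1 := by
    have := congrArg norm hu'
    rwa [norm_pow, norm_one, pow_eq_one_iff_of_nonneg (norm_nonneg _) (by norm_num)] at this
  set z := u / u' with hz
  have hz4 : z ^ 4 = 1 := by rw [hz, div_pow, hu, hu', div_one]
  have hre : 0 < z.re := by
    have h1 : ‖z - 1‖ < 1 := by
      rwa [show u - u' = u' * (z - 1) by rw [hz]; field_simp, norm_mul, hnorm, one_mul] at h
    have h2 := Complex.re_le_norm (1 - z)
    rw [norm_sub_rev] at h2
    simp only [Complex.sub_re, Complex.one_re] at h2
    linarith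
  have hz1 : z = 1 := by
    have : (z - 1) * (z + 1) * (z - Complex.I) * (z + Complex.I) = 0 := by
      linear_combination hz4 + (1 - z ^ 2) * Complex.I_sq
    rcases mul_eq_zero.1 this with h | h
    · rcases mul_eq_zero.1 h with h | h
      · rcases mul_eq_zero.1 h with h | h
        · exact sub_eq_zero.1 h
        · rw [eq_neg_of_add_eq_zero_left h] at hre; norm_num at hre
      · rw [sub_eq_zero.1 h] at hre; norm_num at hre
    · rw [eq_neg_of_add_eq_zero_left h] at hre; norm_num at hre
  rwa [hz, div_eq_one_iff_eq hu'0] at hz1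

theorem exists_cubic_factorization {A : ℂ} (hA : A ≠ 0) (B C D : ℂ) :
    ∃ x y z : ℂ, ∀ w, A * w ^ 3 + B * w ^ 2 + C * w + D = A * (w - x) * (w - y) * (w - z) := by
  set P : Cubic ℂ := ⟨A, B, C, D⟩
  obtain ⟨x, y, z, hroots⟩ :=
    (Cubic.splits_iff_roots_eq_three (P := P) (φ := RingHom.id ℂ) hA).1 (IsAlgClosed.splits _)
  refine ⟨x, y, z, fun w => ?_⟩
  simpa [P, Cubic.map, Cubic.toPoly] using
    congrArg (Polynomial.eval w) (Cubic.eq_prod_three_roots hA hroots)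

theorem exists_quartic_factorization_of_root {A ζ : ℂ} (hA : A ≠ 0) {B C D E : ℂ}
    (hζ : A * ζ ^ 4 + B * ζ ^ 3 + C * ζ ^ 2 + D * ζ + E = 0) :
    ∃ x y z : ℂ, ∀ w, A * w ^ 4 + B * w ^ 3 + C * w ^ 2 + D * w + E =
      A * (w - ζ) * (w - x) * (w - y) * (w - z) := by
  obtain ⟨x, y, z, h⟩ := exists_cubic_factorization hA (B + A * ζ) (C + ζ * (B + A * ζ))
    (D + ζ * (C + ζ * (B + A * ζ)))
  exact ⟨x, y, z, fun w => by linear_combination (w - ζ) * h w + hζ⟩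

theorem exists_unique_isFixedPt_of_lipschitzOnWith {α : Type*} [MetricSpace α] [CompleteSpace α]
    {K : NNReal} (hK : K < 1) {f : α → α} {s : Set α} (hs : IsClosed s) (hne : s.Nonempty)
    (hsf : MapsTo f s s) (hf : LipschitzOnWith K f s) : ∃! x, x ∈ s ∧ Function.IsFixedPt f x := by
  have hcontr : ContractingWith K (hsf.restrict f s s) := ⟨hK, hf.mapsToRestrict hsf⟩
  obtain ⟨x, hxs, hx, -⟩ := hcontr.exists_fixedPoint' hs.isComplete hsf hne.some_mem
    (edist_ne_top _ _)
  refine ⟨x, ⟨hxs, hx⟩, fun y ⟨hys, hy⟩ => ?_⟩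
  exact congrArg Subtype.val
    (hcontr.fixedPoint_unique' (x := ⟨y, hys⟩) (y := ⟨x, hxs⟩) (Subtype.ext hy) (Subtype.ext hx))

theorem le_norm_of_mem_closedBall_one {v : ℂ} (hv : v ∈ closedBall (1 : ℂ) (1 / 10)) :
    9 / 10 ≤ ‖v‖ := by
  have := norm_sub_norm_le (1 : ℂ) v
  rw [norm_one, ← dist_eq_norm, dist_comm] at this
  linarith [mem_closedBall.1 hv]

theorem norm_cpow_three_fourths_sub_le {v v' : ℂ} (hv : v ∈ closedBall (1 : ℂ) (1 / 10))
    (hv' : v' ∈ closedBall (1 : ℂ) (1 / 10)) :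
    ‖v ^ (3 / 4 : ℂ) - v' ^ (3 / 4 : ℂ)‖ ≤ ‖v - v'‖ := by
  have hre : ∀ x ∈ closedBall (1 : ℂ) (1 / 10), 0 < x.re := by
    intro x hx
    have := (abs_le.1 ((Complex.abs_re_le_norm (x - 1)).trans (mem_closedBall_iff_norm.1 hx))).1
    rw [Complex.sub_re, Complex.one_re] at this
    linarith
  have hderiv : ∀ x ∈ closedBall (1 : ℂ) (1 / 10),
      HasDerivWithinAt (fun z : ℂ => z ^ (3 / 4 : ℂ)) ((3 / 4) * x ^ ((3 / 4 : ℂ) - 1))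
        (closedBall (1 : ℂ) (1 / 10)) x := fun x hx =>
    (Complex.hasStrictDerivAt_cpow_const (Or.inl (hre x hx))).hasDerivAt.hasDerivWithinAt
  have hbound : ∀ x ∈ closedBall (1 : ℂ) (1 / 10), ‖(3 / 4 : ℂ) * x ^ ((3 / 4 : ℂ) - 1)‖ ≤ 1 := by
    intro x hx
    have hx9 := le_norm_of_mem_closedBall_one hx
    have hne : x ≠ 0 := norm_pos_iff.1 (by linarith)
    rw [norm_mul, Complex.norm_cpow_of_ne_zero hne]
    norm_num
    have : ‖x‖ ^ (-(1 / 4 : ℝ)) ≤ 10 / 9 := by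
      rcases le_total ‖x‖ 1 with h1 | h1
      · calc ‖x‖ ^ (-(1 / 4 : ℝ)) ≤ ‖x‖ ^ (-1 : ℝ) :=
              Real.rpow_le_rpow_of_exponent_ge (by linarith) h1 (by norm_num)
          _ ≤ 10 / 9 := by
              rw [Real.rpow_neg_one, inv_le_comm₀ (by linarith) (by norm_num)]; linarith
      · linarith [Real.rpow_le_one_of_one_le_of_nonpos h1 (by norm_num : -(1 / 4 : ℝ) ≤ 0)]
    linarith
  simpa using Convex.norm_image_sub_le_of_norm_hasDerivWithin_le hderiv hbound
    (convex_closedBall _ _) hv' hv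

theorem cpow_three_fourths_pow_four (v : ℂ) : (v ^ (3 / 4 : ℂ)) ^ 4 = v ^ 3 := by
  rw [← Complex.cpow_nat_mul]; norm_num

theorem norm_mul_cpow_sub_self_le (w : ℂ) {v : ℂ} (hv : v ∈ closedBall (1 : ℂ) (1 / 10)) :
    ‖w * v ^ (3 / 4 : ℂ) - w‖ ≤ ‖w‖ / 10 := by
  have h := norm_cpow_three_fourths_sub_le hv (mem_closedBall_self (by norm_num))
  rw [Complex.one_cpow] at h
  calc ‖w * v ^ (3 / 4 : ℂ) - w‖ = ‖w‖ * ‖v ^ (3 / 4 : ℂ) - 1‖ := by rw [← mul_sub_one, norm_mul]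
    _ ≤ ‖w‖ * (1 / 10) := by gcongr; exact h.trans (mem_closedBall_iff_norm.1 hv)
    _ = ‖w‖ / 10 := by ring

/-- The quartic `Ξ` of the paper. -/
noncomputable def xi (r c : ℝ) (a w : ℂ) : ℂ := r * (w - a) + c * w ^ 3 * (1 - conj a * w)

section Xi

variable {r c : ℝ} {a ζ η₀ η₁ η₂ : ℂ}

theorem exists_xi_eq_mul_of_xi_eq_zero (hc : c ≠ 0) (ha : a ≠ 0) (hζ : xi r c a ζ = 0) :
    ∃ η₀ η₁ η₂ : ℂ, ∀ w, xi r c a w = -c * conj a * (w - ζ) * (w - η₀) * (w - η₁) * (w - η₂) := by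
  have hA : -(c : ℂ) * conj a ≠ 0 :=
    mul_ne_zero (neg_ne_zero.2 (Complex.ofReal_ne_zero.2 hc)) ((map_ne_zero _).2 ha)
  obtain ⟨η₀, η₁, η₂, h⟩ := exists_quartic_factorization_of_root hA (ζ := ζ) (B := c) (C := 0)
    (D := r) (E := -r * a) (by unfold xi at hζ; linear_combination hζ)
  exact ⟨η₀, η₁, η₂, fun w => by unfold xi; linear_combination h w⟩

theorem conj_mul_sum_roots_eq_one (hc : c ≠ 0)
    (hfac : ∀ w, xi r c a w = -c * conj a * (w - ζ) * (w - η₀) * (w - η₁) * (w - η₂)) :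
    conj a * (ζ + η₀ + η₁ + η₂) = 1 := by
  have h₁ := hfac 1
  have h₂ := hfac (-1)
  have h₃ := hfac 2
  have h₄ := hfac (-2)
  unfold xi at h₁ h₂ h₃ h₄
  apply mul_left_cancel₀ (Complex.ofReal_ne_zero.2 hc)
  linear_combination (-(1 : ℂ) / 12) * h₃ + (1 / 12) * h₄ + (1 / 6) * h₁ - (1 / 6) * h₂

theorem mul_conj_mul_prod_roots
    (hfac : ∀ w, xi r c a w = -c * conj a * (w - ζ) * (w - η₀) * (w - η₁) * (w - η₂)) :
    c * (conj a * ζ) * (η₀ * η₁ * η₂) = r * a := by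
  have h := hfac 0
  unfold xi at h
  linear_combination h

theorem mul_norm_pow_three_mul_norm_le_of_xi_eq_zero (hr : 0 < r) (hc : 0 < c) {w : ℂ}
    (hw : xi r c a w = 0) : c * ‖w‖ ^ 3 * ‖conj a * w - 1‖ ≤ r * (‖w‖ + ‖a‖) := by
  have h : (c : ℂ) * w ^ 3 * (conj a * w - 1) = r * (w - a) := by
    unfold xi at hw; linear_combination -hw
  have := congrArg norm h
  rw [norm_mul, norm_mul, norm_mul, norm_pow, Complex.norm_real, Complex.norm_real,
    Real.norm_of_nonneg hc.le, Real.norm_of_nonneg hr.le] at this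
  rw [this]
  gcongr
  exact norm_sub_le w a

theorem norm_lt_one_or_norm_conj_mul_sub_one_le (hr : 0 < r) (hrc : r < c) {w : ℂ}
    (ha : 3 * ‖a‖ * c ≤ c - r) (hw : xi r c a w = 0) :
    ‖w‖ < 1 ∨ ‖conj a * w - 1‖ ≤ 8 * ‖a‖ ^ 2 := by
  rcases lt_or_ge ‖w‖ 1 with hw1 | hw1
  · exact Or.inl hw1
  right
  have hc : 0 < c := hr.trans hrc
  have key := mul_norm_pow_three_mul_norm_le_of_xi_eq_zero hr hc hw
  have hX : 1 - ‖a‖ * ‖w‖ ≤ ‖conj a * w - 1‖ := by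
    have := norm_sub_norm_le 1 (conj a * w)
    rw [norm_sub_rev, norm_one, norm_mul, Complex.norm_conj] at this
    linarith
  set s := ‖w‖
  set A := ‖a‖
  set X := ‖conj a * w - 1‖
  have hA0 : 0 ≤ A := norm_nonneg _
  have hA3 : 3 * A < 1 := by nlinarith
  have hs0 : 0 < s := by linarith
  have hkey' : c * s ^ 2 * X ≤ r * (1 + A) := by
    have : c * s ^ 3 * X ≤ s * (r * (1 + A)) := by
      nlinarith [mul_le_mul_of_nonneg_left hw1 (mul_nonneg hr.le hA0)]
    nlinarith
  have hAs : 1 / 2 < A * s := by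
    by_contra! h
    -- `s ↦ s² (1 - A s)` increases on `[1, 1 / (2 A)]`.
    have h1 : 1 - A ≤ s ^ 2 * (1 - A * s) := by
      nlinarith [mul_nonneg (sub_nonneg.2 hw1) (by nlinarith : 0 ≤ s + 1 - A * (s ^ 2 + s + 1))]
    have h2 : c * (1 - A) ≤ r * (1 + A) := by
      nlinarith [mul_le_mul_of_nonneg_left hX (by positivity : 0 ≤ c * s ^ 2)]
    nlinarith
  have h4 : 1 < 4 * A ^ 2 * s ^ 2 := by nlinarith
  have hX0 : 0 ≤ X := norm_nonneg _
  have : c * X ≤ c * (8 * A ^ 2) := by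
    nlinarith [mul_le_mul_of_nonneg_left h4.le (mul_nonneg hc.le hX0)]
  exact le_of_mul_le_mul_left this hc

theorem re_conj_mul_bounds_of_xi_eq_zero (hr : 0 < r) (hrc : r < c) {η : ℂ} (ha : ‖a‖ ≤ 1 / 100)
    (hac : 3 * ‖a‖ * c ≤ c - r) (hη : xi r c a η = 0) :
    -1 / 100 ≤ (conj a * η).re ∧ (1 ≤ ‖η‖ → 9 / 10 ≤ (conj a * η).re) := by
  rcases norm_lt_one_or_norm_conj_mul_sub_one_le hr hrc hac hη with h | h
  · refine ⟨?_, fun h' => absurd h (not_lt.2 h')⟩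
    have := Complex.abs_re_le_norm (conj a * η)
    rw [norm_mul, Complex.norm_conj] at this
    nlinarith [abs_le.1 this, norm_nonneg a, norm_nonneg η]
  · have := Complex.abs_re_le_norm (conj a * η - 1)
    rw [Complex.sub_re, Complex.one_re] at this
    have : 9 / 10 ≤ (conj a * η).re := by nlinarith [abs_le.1 this, norm_nonneg a]
    exact ⟨by linarith, fun _ => this⟩

end Xi

/-- `rootMap (r / c) a v = v` is `Ξ(v / conj a) = 0` divided by `c (v / conj a)³`; its solution
near `1` is `conj a` times the root of `Ξ` outside the unit disc. -/
noncomputable def rootMap (ρ : ℝ) (a v : ℂ) : ℂ :=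
  1 + ρ * ((conj a / v) ^ 2 - a * (conj a / v) ^ 3)

theorem rootMap_conj_mul_eq_self_iff {r c : ℝ} (hc : c ≠ 0) {a ζ : ℂ} (ha : a ≠ 0) (hζ : ζ ≠ 0) :
    rootMap (r / c) a (conj a * ζ) = conj a * ζ ↔ xi r c a ζ = 0 := by
  have hb : conj a ≠ 0 := (map_ne_zero _).2 ha
  have hc' : (c : ℂ) ≠ 0 := Complex.ofReal_ne_zero.2 hc
  have key : rootMap (r / c) a (conj a * ζ) - conj a * ζ = xi r c a ζ / (c * ζ ^ 3) := by
    unfold rootMap xi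
    push_cast
    field_simp
    ring
  rw [← sub_eq_zero, key, div_eq_zero_iff]
  simp [hc', hζ]

theorem norm_conj_div_le {a v : ℂ} (ha : ‖a‖ ≤ 1 / 100) (hv : v ∈ closedBall (1 : ℂ) (1 / 10)) :
    ‖conj a / v‖ ≤ 1 / 90 := by
  have hv9 := le_norm_of_mem_closedBall_one hv
  rw [norm_div, Complex.norm_conj, div_le_iff₀ (by linarith)]
  linarith

theorem norm_conj_div_sub_conj_div_le {a a' v v' : ℂ} (ha' : ‖a'‖ ≤ 1 / 100)
    (hv : v ∈ closedBall (1 : ℂ) (1 / 10)) (hv' : v' ∈ closedBall (1 : ℂ) (1 / 10)) :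
    ‖conj a / v - conj a' / v'‖ ≤ 2 * ‖a - a'‖ + ‖v - v'‖ / 50 := by
  have hv9 := le_norm_of_mem_closedBall_one hv
  have hv9' := le_norm_of_mem_closedBall_one hv'
  have hv0 : v ≠ 0 := norm_pos_iff.1 (by linarith)
  have hv0' : v' ≠ 0 := norm_pos_iff.1 (by linarith)
  have split : conj a / v - conj a' / v' = conj (a - a') / v + conj a' / v' * ((v' - v) / v) := by
    rw [map_sub]; field_simp; ring
  rw [split]
  refine (norm_add_le _ _).trans ?_
  rw [norm_div, norm_mul, norm_div, norm_div, Complex.norm_conj, Complex.norm_conj, norm_sub_rev v']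
  have h1 : ‖a - a'‖ / ‖v‖ ≤ 2 * ‖a - a'‖ := by
    rw [div_le_iff₀ (by linarith)]; nlinarith [norm_nonneg (a - a')]
  have h2 : ‖a'‖ / ‖v'‖ ≤ 1 / 90 := by
    rw [div_le_iff₀ (by linarith)]; linarith
  have h3 : ‖v - v'‖ / ‖v‖ ≤ 10 / 9 * ‖v - v'‖ := by
    rw [div_le_iff₀ (by linarith)]; nlinarith [norm_nonneg (v - v')]
  nlinarith [norm_nonneg (v - v'), div_nonneg (norm_nonneg a') (norm_nonneg v'),
    div_nonneg (norm_nonneg (v - v')) (norm_nonneg v)]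

theorem norm_sq_sub_mul_cube_sub_le {p p' a a' : ℂ} (hp : ‖p‖ ≤ 1 / 90) (hp' : ‖p'‖ ≤ 1 / 90)
    (ha' : ‖a'‖ ≤ 1 / 100) :
    ‖(p ^ 2 - a * p ^ 3) - (p' ^ 2 - a' * p' ^ 3)‖ ≤ ‖p - p'‖ / 10 + ‖a - a'‖ / 1000 := by
  have split : (p ^ 2 - a * p ^ 3) - (p' ^ 2 - a' * p' ^ 3) =
      (p - p') * ((p + p') - a' * (p ^ 2 + p * p' + p' ^ 2)) - (a - a') * p ^ 3 := by ring
  have hsum : ‖(p + p') - a' * (p ^ 2 + p * p' + p' ^ 2)‖ ≤ 1 / 10 := by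
    calc _ ≤ ‖p‖ + ‖p'‖ + ‖a'‖ * (‖p‖ ^ 2 + ‖p‖ * ‖p'‖ + ‖p'‖ ^ 2) := by
          refine (norm_sub_le _ _).trans (add_le_add (norm_add_le _ _) ?_)
          rw [norm_mul]
          gcongr
          refine (norm_add_le _ _).trans (add_le_add ((norm_add_le _ _).trans ?_) ?_) <;>
            simp [norm_pow]
      _ ≤ 1 / 90 + 1 / 90 + 1 / 100 * ((1 / 90) ^ 2 + 1 / 90 * (1 / 90) + (1 / 90) ^ 2) := by
          gcongr
      _ ≤ 1 / 10 := by norm_num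
  have hcube : ‖p ^ 3‖ ≤ 1 / 1000 := by
    rw [norm_pow]
    exact (pow_le_pow_left₀ (norm_nonneg _) hp 3).trans (by norm_num)
  rw [split]
  refine (norm_sub_le _ _).trans ?_
  rw [norm_mul, norm_mul]
  nlinarith [mul_le_mul_of_nonneg_left hsum (norm_nonneg (p - p')),
    mul_le_mul_of_nonneg_left hcube (norm_nonneg (a - a'))]

theorem norm_rootMap_sub_le {ρ : ℝ} (hρ0 : 0 ≤ ρ) (hρ1 : ρ ≤ 1) {a a' v v' : ℂ}
    (ha : ‖a‖ ≤ 1 / 100) (ha' : ‖a'‖ ≤ 1 / 100)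
    (hv : v ∈ closedBall (1 : ℂ) (1 / 10)) (hv' : v' ∈ closedBall (1 : ℂ) (1 / 10)) :
    ‖rootMap ρ a v - rootMap ρ a' v'‖ ≤ ‖a - a'‖ / 4 + ‖v - v'‖ / 4 := by
  have key := norm_sq_sub_mul_cube_sub_le (a := a) (norm_conj_div_le ha hv)
    (norm_conj_div_le ha' hv') ha'
  have hp := norm_conj_div_sub_conj_div_le (a := a) ha' hv hv'
  have : rootMap ρ a v - rootMap ρ a' v' = ρ * (((conj a / v) ^ 2 - a * (conj a / v) ^ 3) -
      ((conj a' / v') ^ 2 - a' * (conj a' / v') ^ 3)) := by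
    unfold rootMap; ring
  rw [this, norm_mul, Complex.norm_real, Real.norm_of_nonneg hρ0]
  nlinarith [norm_nonneg (a - a'), norm_nonneg (v - v'), norm_nonneg
    (((conj a / v) ^ 2 - a * (conj a / v) ^ 3) - ((conj a' / v') ^ 2 - a' * (conj a' / v') ^ 3))]

theorem exists_unique_rootMap_fixedPt {ρ : ℝ} (hρ0 : 0 ≤ ρ) (hρ1 : ρ ≤ 1) {w : ℂ}
    (hw : ‖w‖ ≤ 1 / 200) :
    ∃! v, v ∈ closedBall (1 : ℂ) (1 / 10) ∧ rootMap ρ (w * v ^ (3 / 4 : ℂ)) v = v := by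
  have hsmall : ∀ v ∈ closedBall (1 : ℂ) (1 / 10), ‖w * v ^ (3 / 4 : ℂ)‖ ≤ 1 / 100 := by
    intro v hv
    have := norm_le_norm_add_norm_sub' (w * v ^ (3 / 4 : ℂ)) w
    linarith [norm_mul_cpow_sub_self_le w hv]
  refine exists_unique_isFixedPt_of_lipschitzOnWith (K := 1 / 2) (by norm_num)
    isClosed_closedBall ⟨1, mem_closedBall_self (by norm_num)⟩ (fun v hv => ?_) ?_
  · have := norm_rootMap_sub_le hρ0 hρ1 (hsmall v hv) (a' := 0) (by simp) hv hv
    rw [show rootMap ρ 0 v = 1 by simp [rootMap], sub_zero, sub_self, norm_zero, zero_div,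
      add_zero] at this
    rw [mem_closedBall, dist_eq_norm]
    linarith [hsmall v hv]
  · refine LipschitzOnWith.of_dist_le_mul fun v hv v' hv' => ?_
    rw [dist_eq_norm, dist_eq_norm]
    have h1 := norm_rootMap_sub_le hρ0 hρ1 (hsmall v hv) (hsmall v' hv') hv hv'
    have h2 : ‖w * v ^ (3 / 4 : ℂ) - w * v' ^ (3 / 4 : ℂ)‖ ≤ ‖v - v'‖ / 200 := by
      rw [← mul_sub, norm_mul]
      have := norm_cpow_three_fourths_sub_le hv hv'
      nlinarith [norm_nonneg w, norm_nonneg (v ^ (3 / 4 : ℂ) - v' ^ (3 / 4 : ℂ))]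
    push_cast
    linarith [norm_nonneg (v - v')]

theorem exists_rootsOfUnity_eq_mul_cpow {a β v : ℂ} (hβ0 : β ≠ 0)
    (hv : v ∈ closedBall (1 : ℂ) (1 / 10)) (ha : a ^ 4 = β ^ 4 * v ^ 3) :
    ∃ u : rootsOfUnity 4 ℂ, a = (u : ℂˣ) * β * v ^ (3 / 4 : ℂ) := by
  have hne : v ^ (3 / 4 : ℂ) ≠ 0 := by
    rw [Ne, Complex.cpow_eq_zero_iff, not_and_or]
    exact Or.inl (norm_pos_iff.1 ((by norm_num : (0 : ℝ) < 9 / 10).trans_le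
      (le_norm_of_mem_closedBall_one hv)))
  have hd : β * v ^ (3 / 4 : ℂ) ≠ 0 := mul_ne_zero hβ0 hne
  have hu4 : (a / (β * v ^ (3 / 4 : ℂ))) ^ 4 = 1 := by
    rw [div_pow, div_eq_one_iff_eq (pow_ne_zero 4 hd), mul_pow, cpow_three_fourths_pow_four, ha]
  refine ⟨rootsOfUnity.mkOfPowEq _ hu4, ?_⟩
  rw [rootsOfUnity.coe_mkOfPowEq]
  field_simp

theorem ncard_setOf_rootMap_fixedPt {ρ : ℝ} (hρ0 : 0 ≤ ρ) (hρ1 : ρ ≤ 1) {β : ℂ} (hβ0 : β ≠ 0)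
    (hβ : ‖β‖ ≤ 1 / 200) :
    {a : ℂ | ∃ v ∈ closedBall (1 : ℂ) (1 / 10), rootMap ρ a v = v ∧ a ^ 4 = β ^ 4 * v ^ 3}.ncard
      = 4 := by
  have hu : ∀ u : rootsOfUnity 4 ℂ, ((u : ℂˣ) : ℂ) ^ 4 = 1 := fun u => by
    rw [← Units.val_pow_eq_pow_val, (mem_rootsOfUnity 4 _).1 u.2, Units.val_one]
  have hnorm : ∀ u : rootsOfUnity 4 ℂ, ‖((u : ℂˣ) : ℂ) * β‖ = ‖β‖ := fun u => by
    have := congrArg norm (hu u)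
    rw [norm_pow, norm_one, pow_eq_one_iff_of_nonneg (norm_nonneg _) (by norm_num)] at this
    rw [norm_mul, this, one_mul]
  choose v hv huniq using fun u : rootsOfUnity 4 ℂ =>
    exists_unique_rootMap_fixedPt hρ0 hρ1 ((hnorm u).trans_le hβ)
  set f : rootsOfUnity 4 ℂ → ℂ := fun u => (u : ℂˣ) * β * v u ^ (3 / 4 : ℂ)
  have hS : {a : ℂ | ∃ v ∈ closedBall (1 : ℂ) (1 / 10), rootMap ρ a v = v ∧
      a ^ 4 = β ^ 4 * v ^ 3} = range f := by
    ext a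
    constructor
    · rintro ⟨v', hv', hfix, ha4⟩
      obtain ⟨u, hau⟩ := exists_rootsOfUnity_eq_mul_cpow hβ0 hv' ha4
      exact ⟨u, by rw [hau, huniq u v' ⟨hv', by rwa [← hau]⟩]⟩
    · rintro ⟨u, rfl⟩
      refine ⟨v u, (hv u).1, (hv u).2, ?_⟩
      rw [mul_pow, mul_pow, hu, one_mul, cpow_three_fourths_pow_four]
  have hinj : Function.Injective f := by
    intro u u' h
    have hclose : ‖((u : ℂˣ) : ℂ) - (u' : ℂˣ)‖ * ‖β‖ ≤ ‖β‖ / 5 := by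
      have h1 := norm_mul_cpow_sub_self_le ((u : ℂˣ) * β) (hv u).1
      have h2 := norm_mul_cpow_sub_self_le ((u' : ℂˣ) * β) (hv u').1
      rw [hnorm] at h1 h2
      rw [← norm_mul, sub_mul]
      calc _ = ‖(f u' - (u' : ℂˣ) * β) - (f u - (u : ℂˣ) * β)‖ := by rw [h]; ring_nf
        _ ≤ ‖β‖ / 10 + ‖β‖ / 10 := (norm_sub_le _ _).trans (add_le_add h2 h1)
        _ = ‖β‖ / 5 := by ring
    have hβpos : 0 < ‖β‖ := norm_pos_iff.2 hβ0
    exact Subtype.ext (Units.ext (eq_of_pow_four_eq_one_of_norm_sub_lt_one (hu u) (hu u')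
      (by nlinarith)))
  rw [hS, Set.ncard_range_of_injective hinj, Complex.card_rootsOfUnity]

/-- The parameters `a` of equation (cond2) with `I = ∅`; `q` stands for `(1 - t) / t`. -/
noncomputable def cond2Solutions (r c q θ : ℝ) : Set ℂ :=
  {a : ℂ | 0 < ‖a‖ ∧ ‖a‖ < 1 ∧
    ∃ η₀ η₁ η₂ ζ : ℂ, ‖η₀‖ < 1 ∧ ‖η₁‖ < 1 ∧ ‖η₂‖ < 1 ∧ 1 < ‖ζ‖ ∧
      (∀ w : ℂ, xi r c a w = -c * conj a * (w - ζ) * (w - η₀) * (w - η₁) * (w - η₂)) ∧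
      a * r * (q : ℂ) ^ 2 * (η₀ * η₁ * η₂) ^ 3 = Complex.exp (6 * θ * Complex.I)}

theorem norm_exp_six_mul_I (θ : ℝ) : ‖Complex.exp (6 * θ * Complex.I)‖ = 1 := by
  simp [Complex.norm_exp]

theorem mul_pow_three_eq_iff_pow_four_eq {r c q : ℝ} (hr : r ≠ 0) (hc : c ≠ 0) (hq : q ≠ 0)
    {a v P e : ℂ} (hv : v ≠ 0) (hP : c * v * P = r * a) :
    a * r * (q : ℂ) ^ 2 * P ^ 3 = e ↔ a ^ 4 = ((c ^ 3 / (r ^ 4 * q ^ 2) : ℝ) : ℂ) * e * v ^ 3 := by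
  have hr' : (r : ℂ) ≠ 0 := Complex.ofReal_ne_zero.2 hr
  have hc' : (c : ℂ) ≠ 0 := Complex.ofReal_ne_zero.2 hc
  have hq' : (q : ℂ) ≠ 0 := Complex.ofReal_ne_zero.2 hq
  obtain rfl : P = r * a / (c * v) := by field_simp; linear_combination hP
  push_cast
  constructor <;> intro h <;> field_simp at h ⊢ <;> linear_combination h

-- `‖a‖ = κ ‖ζ‖³` and `‖ζ‖ ≤ 1 / ‖a‖ + 3`, so `‖a‖ > ε` would give `‖a‖ ≤ κ (1 / ε + 3)³ ≤ ε`.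
theorem norm_le_of_mem_cond2Solutions {r c q θ ε : ℝ} (hr : 0 < r) (hrc : r < c) (hq : q ≠ 0)
    (hε : 0 < ε) (hκ : c ^ 3 / (r ^ 4 * q ^ 2) * (1 / ε + 3) ^ 3 ≤ ε) {a : ℂ}
    (ha : a ∈ cond2Solutions r c q θ) : ‖a‖ ≤ ε := by
  obtain ⟨ha0, -, η₀, η₁, η₂, ζ, h₀, h₁, h₂, hζ, hfac, hcon⟩ := ha
  have hc : 0 < c := hr.trans hrc
  have hv0 : conj a * ζ ≠ 0 :=
    mul_ne_zero ((map_ne_zero _).2 (norm_pos_iff.1 ha0)) (norm_pos_iff.1 (by linarith))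
  have ha4 := (mul_pow_three_eq_iff_pow_four_eq hr.ne' hc.ne' hq hv0
    (mul_conj_mul_prod_roots hfac)).1 hcon
  set κ := c ^ 3 / (r ^ 4 * q ^ 2)
  have hκ0 : 0 ≤ κ := by positivity
  have hnorm : ‖a‖ = κ * ‖ζ‖ ^ 3 := by
    have := congrArg norm ha4
    rw [norm_pow, norm_mul, norm_mul, norm_exp_six_mul_I, norm_pow, norm_mul, Complex.norm_conj,
      Complex.norm_real, Real.norm_of_nonneg hκ0] at this
    have h3 : 0 < ‖a‖ ^ 3 := by positivity
    nlinarith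
  have hsum : ‖a‖ * ‖ζ‖ ≤ 1 + 3 * ‖a‖ := by
    have h := conj_mul_sum_roots_eq_one hc.ne' hfac
    have : conj a * ζ = 1 - (conj a * η₀ + conj a * η₁ + conj a * η₂) := by
      linear_combination h
    have := congrArg norm this
    rw [norm_mul, Complex.norm_conj] at this
    rw [this]
    refine (norm_sub_le _ _).trans ?_
    have h3 := norm_add₃_le (a := conj a * η₀) (b := conj a * η₁) (c := conj a * η₂)
    simp only [norm_mul, Complex.norm_conj] at h3
    rw [norm_one]
    nlinarith [norm_nonneg a]
  by_contra! h
  have hζε : ‖ζ‖ ≤ 1 / ε + 3 := by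
    rw [div_add' _ _ _ hε.ne', le_div_iff₀ hε]
    nlinarith
  have := pow_le_pow_left₀ (norm_nonneg ζ) hζε 3
  nlinarith

theorem exists_rootMap_eq_of_mem_cond2Solutions {r c q θ ε : ℝ} (hr : 0 < r) (hrc : r < c)
    (hq : q ≠ 0) (hε : 0 < ε) (hε1 : ε ≤ 1 / 100) (hεc : 3 * ε * c ≤ c - r)
    (hκ : c ^ 3 / (r ^ 4 * q ^ 2) * (1 / ε + 3) ^ 3 ≤ ε) {a : ℂ}
    (ha : a ∈ cond2Solutions r c q θ) :
    ∃ v ∈ closedBall (1 : ℂ) (1 / 10), rootMap (r / c) a v = v ∧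
      a ^ 4 = ((c ^ 3 / (r ^ 4 * q ^ 2) : ℝ) : ℂ) * Complex.exp (6 * θ * Complex.I) * v ^ 3 := by
  have haε := norm_le_of_mem_cond2Solutions hr hrc hq hε hκ ha
  obtain ⟨ha0, -, η₀, η₁, η₂, ζ, h₀, h₁, h₂, hζ, hfac, hcon⟩ := ha
  have hc : 0 < c := hr.trans hrc
  have ha0' : a ≠ 0 := norm_pos_iff.1 ha0
  have hζ0 : ζ ≠ 0 := norm_pos_iff.1 (by linarith)
  have hv0 : conj a * ζ ≠ 0 := mul_ne_zero ((map_ne_zero _).2 ha0') hζ0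
  have ha4 := (mul_pow_three_eq_iff_pow_four_eq hr.ne' hc.ne' hq hv0
    (mul_conj_mul_prod_roots hfac)).1 hcon
  refine ⟨conj a * ζ, ?_, (rootMap_conj_mul_eq_self_iff hc.ne' ha0' hζ0).2
    (by rw [hfac]; ring), ha4⟩
  rcases norm_lt_one_or_norm_conj_mul_sub_one_le hr hrc (by nlinarith [norm_nonneg a])
    (show xi r c a ζ = 0 by rw [hfac]; ring) with h | h
  · linarith
  · rw [mem_closedBall_iff_norm]
    nlinarith [norm_nonneg a]

theorem mem_cond2Solutions_of_rootMap_eq {r c q θ : ℝ} (hr : 0 < r) (hrc : r < c) (hq : q ≠ 0)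
    {a v : ℂ} (ha0 : a ≠ 0) (ha1 : ‖a‖ ≤ 1 / 100) (hac : 3 * ‖a‖ * c ≤ c - r)
    (hv : v ∈ closedBall (1 : ℂ) (1 / 10)) (hfix : rootMap (r / c) a v = v)
    (ha4 : a ^ 4 = ((c ^ 3 / (r ^ 4 * q ^ 2) : ℝ) : ℂ) * Complex.exp (6 * θ * Complex.I) * v ^ 3) :
    a ∈ cond2Solutions r c q θ := by
  have hc : 0 < c := hr.trans hrc
  have hb : conj a ≠ 0 := (map_ne_zero _).2 ha0
  have hv9 := le_norm_of_mem_closedBall_one hv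
  have hv0 : v ≠ 0 := norm_pos_iff.1 (by linarith)
  set ζ := v / conj a with hζdef
  have hbζ : conj a * ζ = v := mul_div_cancel₀ v hb
  have hζ0 : ζ ≠ 0 := div_ne_zero hv0 hb
  have hxi : xi r c a ζ = 0 :=
    (rootMap_conj_mul_eq_self_iff hc.ne' ha0 hζ0).1 (by rwa [hbζ])
  obtain ⟨η₀, η₁, η₂, hfac⟩ := exists_xi_eq_mul_of_xi_eq_zero hc.ne' ha0 hxi
  -- A root outside the unit disc has `conj a * η` near `1`, and then the real part of
  -- `conj a * (ζ + η₀ + η₁ + η₂) = 1` would be too large.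
  have hre := fun η => re_conj_mul_bounds_of_xi_eq_zero (η := η) hr hrc ha1 hac
  obtain ⟨hl₀, hu₀⟩ := hre η₀ (by rw [hfac]; ring)
  obtain ⟨hl₁, hu₁⟩ := hre η₁ (by rw [hfac]; ring)
  obtain ⟨hl₂, hu₂⟩ := hre η₂ (by rw [hfac]; ring)
  have hsum : v.re + (conj a * η₀).re + (conj a * η₁).re + (conj a * η₂).re = 1 := by
    have h := congrArg Complex.re (conj_mul_sum_roots_eq_one hc.ne' hfac)
    rw [mul_add, mul_add, mul_add, hbζ] at h
    simpa only [Complex.add_re, Complex.one_re] using h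
  have hvre : 9 / 10 ≤ v.re := by
    have := Complex.abs_re_le_norm (v - 1)
    rw [Complex.sub_re, Complex.one_re] at this
    linarith [abs_le.1 (this.trans (mem_closedBall_iff_norm.1 hv))]
  refine ⟨norm_pos_iff.2 ha0, by linarith, η₀, η₁, η₂, ζ, ?_, ?_, ?_, ?_, hfac,
    (mul_pow_three_eq_iff_pow_four_eq hr.ne' hc.ne' hq hv0
      (hbζ ▸ mul_conj_mul_prod_roots hfac)).2 ha4⟩
  · by_contra! h; linarith [hu₀ h]
  · by_contra! h; linarith [hu₁ h]
  · by_contra! h; linarith [hu₂ h]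
  · rw [hζdef, norm_div, Complex.norm_conj, lt_div_iff₀ (norm_pos_iff.2 ha0)]
    linarith

theorem cond2Solutions_eq {r c q θ ε : ℝ} (hr : 0 < r) (hrc : r < c) (hq : q ≠ 0) (hε : 0 < ε)
    (hε1 : ε ≤ 1 / 100) (hεc : 3 * ε * c ≤ c - r)
    (hκ : c ^ 3 / (r ^ 4 * q ^ 2) * (1 / ε + 3) ^ 3 ≤ ε) {β : ℂ}
    (hβ : β ^ 4 = ((c ^ 3 / (r ^ 4 * q ^ 2) : ℝ) : ℂ) * Complex.exp (6 * θ * Complex.I))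
    (hβ0 : β ≠ 0) (hβε : ‖β‖ ≤ ε / 2) :
    cond2Solutions r c q θ =
      {a : ℂ | ∃ v ∈ closedBall (1 : ℂ) (1 / 10), rootMap (r / c) a v = v ∧
        a ^ 4 = β ^ 4 * v ^ 3} := by
  ext a
  constructor
  · intro ha
    obtain ⟨v, hv, hfix, ha4⟩ :=
      exists_rootMap_eq_of_mem_cond2Solutions hr hrc hq hε hε1 hεc hκ ha
    exact ⟨v, hv, hfix, hβ ▸ ha4⟩
  · rintro ⟨v, hv, hfix, ha4⟩
    have hv9 := le_norm_of_mem_closedBall_one hv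
    have hnorm : ‖a‖ ^ 4 ≤ (11 / 10 * ‖β‖) ^ 4 := by
      have hv11 : ‖v‖ ≤ 11 / 10 := by
        linarith [norm_le_norm_add_norm_sub' v 1, mem_closedBall_iff_norm.1 hv, norm_one (α := ℂ)]
      have : ‖v‖ ^ 3 ≤ (11 / 10) ^ 4 :=
        (pow_le_pow_left₀ (norm_nonneg v) hv11 3).trans (by norm_num)
      rw [← norm_pow, ha4, norm_mul, norm_pow, norm_pow, mul_pow, mul_comm ((11 / 10 : ℝ) ^ 4)]
      exact mul_le_mul_of_nonneg_left this (by positivity)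
    have haε : ‖a‖ ≤ ε := by
      have := (pow_le_pow_iff_left₀ (norm_nonneg a) (by positivity) four_ne_zero).1 hnorm
      linarith
    have ha0 : a ≠ 0 := by
      rintro rfl
      exact mul_ne_zero (pow_ne_zero 4 hβ0)
        (pow_ne_zero 3 (norm_pos_iff.1 (show 0 < ‖v‖ by linarith)))
        (by rw [← ha4]; ring)
    exact mem_cond2Solutions_of_rootMap_eq hr hrc hq ha0 (haε.trans hε1)
      (by nlinarith [hr.trans hrc]) hv hfix (hβ ▸ ha4)

theorem ncard_cond2Solutions {r c q θ ε : ℝ} (hr : 0 < r) (hrc : r < c) (hq : q ≠ 0)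
    (hε : 0 < ε) (hε1 : ε ≤ 1 / 100) (hεc : 3 * ε * c ≤ c - r)
    (hκε : c ^ 3 / (r ^ 4 * q ^ 2) ≤ (ε / 2) ^ 4)
    (hκ : c ^ 3 / (r ^ 4 * q ^ 2) * (1 / ε + 3) ^ 3 ≤ ε) :
    (cond2Solutions r c q θ).ncard = 4 := by
  have hc : 0 < c := hr.trans hrc
  have hκ0 : 0 < c ^ 3 / (r ^ 4 * q ^ 2) := by positivity
  obtain ⟨β, hβ⟩ := IsAlgClosed.exists_pow_nat_eq
    (((c ^ 3 / (r ^ 4 * q ^ 2) : ℝ) : ℂ) * Complex.exp (6 * θ * Complex.I)) four_pos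
  have hβnorm : ‖β‖ ^ 4 = c ^ 3 / (r ^ 4 * q ^ 2) := by
    rw [← norm_pow, hβ, norm_mul, norm_exp_six_mul_I, mul_one, Complex.norm_real,
      Real.norm_of_nonneg hκ0.le]
  have hβε : ‖β‖ ≤ ε / 2 :=
    (pow_le_pow_iff_left₀ (norm_nonneg _) (by positivity) four_ne_zero).1 (hβnorm ▸ hκε)
  have hβ0 : β ≠ 0 := by
    rintro rfl
    rw [norm_zero, zero_pow four_ne_zero] at hβnorm
    exact hκ0.ne hβnorm
  rw [cond2Solutions_eq hr hrc hq hε hε1 hεc hκ hβ hβ0 hβε]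
  exact ncard_setOf_rootMap_fixedPt (div_nonneg hr.le hc.le) ((div_le_one hc).2 hrc.le) hβ0
    (by linarith)

theorem tendsto_one_sub_div_self_nhdsGT_zero :
    Tendsto (fun t : ℝ => (1 - t) / t) (𝓝[>] 0) atTop := by
  refine (tendsto_atTop_add_const_right _ (-1) tendsto_inv_nhdsGT_zero).congr' ?_
  filter_upwards [self_mem_nhdsWithin] with t (ht : 0 < t)
  field_simp
  ring

theorem tendsto_kappa_nhdsGT_zero (r c : ℝ) :
    Tendsto (fun t : ℝ => c ^ 3 / (r ^ 4 * ((1 - t) / t) ^ 2)) (𝓝[>] 0) (𝓝 0) := by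
  have := ((tendsto_pow_atTop two_ne_zero).comp tendsto_one_sub_div_self_nhdsGT_zero
    ).inv_tendsto_atTop.const_mul (c ^ 3 / r ^ 4)
  rw [mul_zero] at this
  exact this.congr fun t => by
    rw [Pi.inv_apply, Function.comp_apply, ← div_div, div_eq_mul_inv (c ^ 3 / r ^ 4)]

/-- Proposition `m=2`: for `t` small enough and any `θ`, equation (cond2) with
`I = ∅` has exactly four solutions `a` in the punctured unit disc. -/
theorem stmt_7 (r c : ℝ) (hr : 0 < r) (hrc : r < c) :
    ∃ t₀ ∈ Set.Ioo (0 : ℝ) 1, ∀ t ∈ Set.Ioo (0 : ℝ) t₀, ∀ θ : ℝ,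
      {a : ℂ | 0 < ‖a‖ ∧ ‖a‖ < 1 ∧
        ∃ η₀ η₁ η₂ ζ : ℂ,
          ‖η₀‖ < 1 ∧ ‖η₁‖ < 1 ∧ ‖η₂‖ < 1 ∧
          1 < ‖ζ‖ ∧
          (∀ w : ℂ,
            r * (w - a) + c * w ^ 3 * (1 - (starRingEnd ℂ) a * w) =
              -c * (starRingEnd ℂ) a * (w - ζ) * (w - η₀) * (w - η₁) * (w - η₂)) ∧
          a * r * (((1 - t : ℝ) / t : ℝ) : ℂ) ^ 2 * (η₀ * η₁ * η₂) ^ 3 =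
            Complex.exp (6 * θ * Complex.I)}.ncard = 4 := by
  have hc : 0 < c := hr.trans hrc
  obtain ⟨ε, hε, hε1, hεc⟩ : ∃ ε : ℝ, 0 < ε ∧ ε ≤ 1 / 100 ∧ 3 * ε * c ≤ c - r := by
    refine ⟨min (1 / 100) ((c - r) / (3 * c)), lt_min (by norm_num) (div_pos (by linarith)
      (by positivity)), min_le_left _ _, ?_⟩
    calc 3 * min (1 / 100) ((c - r) / (3 * c)) * c ≤ 3 * ((c - r) / (3 * c)) * c := by
          gcongr; exact min_le_right _ _
      _ = c - r := by field_simp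
  obtain ⟨t₀, ht₀, hsmall⟩ := mem_nhdsGT_iff_exists_Ioo_subset.1
    ((tendsto_one_sub_div_self_nhdsGT_zero.eventually_gt_atTop 0).and
      ((tendsto_kappa_nhdsGT_zero r c).eventually (gt_mem_nhds
      (show 0 < min ((ε / 2) ^ 4) (ε / (1 / ε + 3) ^ 3) by positivity))))
  refine ⟨min t₀ (1 / 2), ⟨lt_min ht₀ (by norm_num), (min_le_right _ _).trans_lt (by norm_num)⟩,
    fun t ht θ => ?_⟩
  obtain ⟨hqt, hκt⟩ := hsmall ⟨ht.1, ht.2.trans_le (min_le_left _ _)⟩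
  refine ncard_cond2Solutions hr hrc hqt.ne' hε hε1 hεc (hκt.le.trans (min_le_left _ _)) ?_
  have := hκt.trans_le (min_le_right _ _)
  rw [lt_div_iff₀ (by positivity)] at this
  exact this.le
end

section
/- Let q ∈ ℂ with q ≠ 0, and define W(u, w) = u + 2·q⁶·(1 + w)²/u² + q¹²·(1 + w)⁵/(u⁵·w) for u, w ∈ ℂ with u ≠ 0 and w ≠ 0. Then a point (u, w) with u ≠ 0 and w ≠ 0 satisfies both ∂W/∂u = 0 and ∂W/∂w = 0 (complex partial derivatives) if and only if w = 1/8 and u³ = (9/4)³·q⁶, i.e. u = (9/4)·q²·ζ for some ζ ∈ ℂ with ζ³ = 1. -/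
/-!
Clearing denominators, `∂W/∂u = P/(u⁶w)` and `∂W/∂w = Q/(u⁵w²)` for two polynomials `P`, `Q`.
Setting `s = 1 + w`, a combination of `P` and `Q` equals `q⁶s⁴u⁶w(1 - 8w)`, and `P = 0` already
forces `q⁶s² ≠ 0`; so a critical point has `w = 1/8`, where `Q` becomes
`(9/128) q⁶ (u³ - (9/4)³ q⁶)`.
-/

section Algebra

variable {K : Type*} [Field K]

def superpotential (q u w : K) : K :=
  u + 2 * q ^ 6 * (1 + w) ^ 2 / u ^ 2 + q ^ 12 * (1 + w) ^ 5 / (u ^ 5 * w)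

def superpotentialNumU (q u w : K) : K :=
  u ^ 6 * w - 4 * q ^ 6 * (1 + w) ^ 2 * u ^ 3 * w - 5 * q ^ 12 * (1 + w) ^ 5

def superpotentialNumW (q u w : K) : K :=
  4 * q ^ 6 * (1 + w) * u ^ 3 * w ^ 2 + q ^ 12 * (1 + w) ^ 4 * (4 * w - 1)

variable {q u w : K}

theorem pow_mul_pow_ne_zero_of_superpotentialNumU_eq_zero (h : superpotentialNumU q u w = 0)
    (hu : u ≠ 0) (hw : w ≠ 0) : q ^ 6 * (1 + w) ^ 2 ≠ 0 := by
  intro hq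
  unfold superpotentialNumU at h
  have : u ^ 6 * w = 0 := by
    linear_combination h + (4 * u ^ 3 * w + 5 * q ^ 6 * (1 + w) ^ 3) * hq
  exact mul_ne_zero (pow_ne_zero 6 hu) hw this

theorem eq_one_div_eight_of_superpotentialNum_eq_zero [CharZero K]
    (hU : superpotentialNumU q u w = 0) (hW : superpotentialNumW q u w = 0)
    (hu : u ≠ 0) (hw : w ≠ 0) : w = 1 / 8 := by
  have hq := pow_mul_pow_ne_zero_of_superpotentialNumU_eq_zero hU hu hw
  have hs : (1 + w) ^ 2 ≠ 0 := right_ne_zero_of_mul hq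
  have key : q ^ 6 * (1 + w) ^ 2 * (1 + w) ^ 2 * u ^ 6 * w * (1 - 8 * w) = 0 := by
    unfold superpotentialNumU at hU
    unfold superpotentialNumW at hW
    linear_combination (q ^ 6 * (1 + w) ^ 4 * (1 - 4 * w) ^ 2) * hU
      - (5 * q ^ 6 * (1 + w) ^ 5 * (1 - 4 * w) + 4 * (1 + w) ^ 3 * u ^ 3 * w) * hW
  have h8 : 1 - 8 * w = 0 := by simpa [hq, hs, hu, hw] using key
  linear_combination (-1 / 8 : K) * h8

theorem superpotentialNumU_one_div_eight [CharZero K] (q u : K) :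
    superpotentialNumU q u (1 / 8) =
      1 / 8 * (u ^ 3 - (9 / 4) ^ 3 * q ^ 6) * (u ^ 3 + 405 / 64 * q ^ 6) := by
  unfold superpotentialNumU; ring

theorem superpotentialNumW_one_div_eight [CharZero K] (q u : K) :
    superpotentialNumW q u (1 / 8) = 9 / 128 * q ^ 6 * (u ^ 3 - (9 / 4) ^ 3 * q ^ 6) := by
  unfold superpotentialNumW; ring

theorem superpotentialNum_eq_zero_iff [CharZero K] (hu : u ≠ 0) (hw : w ≠ 0) :
    superpotentialNumU q u w = 0 ∧ superpotentialNumW q u w = 0 ↔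
      w = 1 / 8 ∧ u ^ 3 = (9 / 4) ^ 3 * q ^ 6 := by
  constructor
  · rintro ⟨hU, hW⟩
    have hq : q ≠ 0 := by
      simpa using left_ne_zero_of_mul (pow_mul_pow_ne_zero_of_superpotentialNumU_eq_zero hU hu hw)
    obtain rfl := eq_one_div_eight_of_superpotentialNum_eq_zero hU hW hu hw
    rw [superpotentialNumW_one_div_eight] at hW
    exact ⟨rfl, sub_eq_zero.mp (by simpa [hq] using hW)⟩
  · rintro ⟨rfl, hu3⟩
    rw [superpotentialNumU_one_div_eight, superpotentialNumW_one_div_eight, hu3]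
    simp

end Algebra

section Derivatives

variable {𝕜 : Type*} [NontriviallyNormedField 𝕜] {q u w : 𝕜}

theorem hasDerivAt_superpotential_left (hu : u ≠ 0) (hw : w ≠ 0) :
    HasDerivAt (fun u' => superpotential q u' w)
      (superpotentialNumU q u w / (u ^ 6 * w)) u := by
  have h := ((hasDerivAt_id u).add
    ((hasDerivAt_const u (2 * q ^ 6 * (1 + w) ^ 2)).div (hasDerivAt_pow 2 u)
      (pow_ne_zero 2 hu))).add
    ((hasDerivAt_const u (q ^ 12 * (1 + w) ^ 5)).div ((hasDerivAt_pow 5 u).mul_const w)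
      (mul_ne_zero (pow_ne_zero 5 hu) hw))
  refine h.congr_deriv ?_
  unfold superpotentialNumU
  field_simp
  ring

theorem hasDerivAt_superpotential_right (hu : u ≠ 0) (hw : w ≠ 0) :
    HasDerivAt (fun w' => superpotential q u w')
      (superpotentialNumW q u w / (u ^ 5 * w ^ 2)) w := by
  have hs : HasDerivAt (fun w' : 𝕜 => 1 + w') 1 w := (hasDerivAt_id w).const_add 1
  have h := ((hasDerivAt_const w u).add
    (((hs.pow 2).const_mul (2 * q ^ 6)).div_const (u ^ 2))).add
    (((hs.pow 5).const_mul (q ^ 12)).div ((hasDerivAt_id w).const_mul (u ^ 5))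
      (mul_ne_zero (pow_ne_zero 5 hu) hw))
  refine h.congr_deriv ?_
  simp only [id, Pi.pow_apply]
  unfold superpotentialNumW
  field_simp
  ring

end Derivatives

theorem stmt_9_general (q : ℂ) (u w : ℂ) (hu : u ≠ 0) (hw : w ≠ 0) :
    (deriv (fun u' : ℂ =>
        u' + 2 * q ^ 6 * (1 + w) ^ 2 / u' ^ 2 + q ^ 12 * (1 + w) ^ 5 / (u' ^ 5 * w)) u = 0 ∧
     deriv (fun w' : ℂ =>
        u + 2 * q ^ 6 * (1 + w') ^ 2 / u ^ 2 + q ^ 12 * (1 + w') ^ 5 / (u ^ 5 * w')) w = 0)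
    ↔ (w = 1 / 8 ∧ u ^ 3 = (9 / 4) ^ 3 * q ^ 6) := by
  change deriv (fun u' => superpotential q u' w) u = 0 ∧
      deriv (fun w' => superpotential q u w') w = 0 ↔ _
  rw [(hasDerivAt_superpotential_left hu hw).deriv,
    (hasDerivAt_superpotential_right hu hw).deriv]
  simpa [hu, hw] using superpotentialNum_eq_zero_iff hu hw

/-- Critical points of the superpotential of the monotone `T(1,4,25)` torus:
`W(u,w) = u + 2q⁶(1+w)²/u² + q¹²(1+w)⁵/(u⁵w)` has critical points exactly at
`w = 1/8`, `u³ = (9/4)³·q⁶`. -/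
theorem stmt_9 (q : ℂ) (hq : q ≠ 0) (u w : ℂ) (hu : u ≠ 0) (hw : w ≠ 0) :
    (deriv (fun u' : ℂ =>
        u' + 2 * q ^ 6 * (1 + w) ^ 2 / u' ^ 2 + q ^ 12 * (1 + w) ^ 5 / (u' ^ 5 * w)) u = 0 ∧
     deriv (fun w' : ℂ =>
        u + 2 * q ^ 6 * (1 + w') ^ 2 / u ^ 2 + q ^ 12 * (1 + w') ^ 5 / (u ^ 5 * w')) w = 0)
    ↔ (w = 1 / 8 ∧ u ^ 3 = (9 / 4) ^ 3 * q ^ 6) :=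
  stmt_9_general q u w hu hw
end

section
/- Let E₁, E₂ ∈ ℂ with E₁ ≠ 0, and let u₁, u₂ ∈ ℂ with u₁ ≠ 0, u₂ ≠ 0. Set w = u₁/u₂ and assume 1 + w ≠ 0; set w̃ = E₁·(1 + w)²/(u₁·u₂) and assume 1 + w̃ ≠ 0. Define z₁ = u₁·(1 + w̃)/(1 + w) and z₂ = u₂/((1 + w)·(1 + w̃)). Then z₁ + z₂ + E₁/z₁ + E₂/z₂ = u₂ + (E₁ + E₂)·(1 + w)/u₂ + E₁·E₂·(1 + w)³/(u₁·u₂²). -/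
/-!
Both wall-crossings are birational substitutions, so the theorem is the composite of two
identities of rational functions. Under `z₁ = v₁ (1 + w̃)`, `z₂ = v₂ / (1 + w̃)` with
`w̃ = E₁ / (v₁ v₂)`, the term `E₁ / z₁` combines with `z₂` to `v₂`, turning the Clifford
potential into `v₁ + v₂ + (E₁ + E₂) / v₂ + E₁ E₂ / (v₁ v₂²)`. The second substitution
`vᵢ = uᵢ / (1 + w)` with `w = u₁ / u₂` collapses `v₁ + v₂` to `u₂` and merely rescales the
remaining terms.
-/

section WallCrossing

variable {K : Type*} [Field K]

def cliffordPotential (E₁ E₂ z₁ z₂ : K) : K := z₁ + z₂ + E₁ / z₁ + E₂ / z₂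

theorem cliffordPotential_wallCrossing {E₁ E₂ v₁ v₂ : K} (hv₁ : v₁ ≠ 0) (hv₂ : v₂ ≠ 0)
    (hw : 1 + E₁ / (v₁ * v₂) ≠ 0) :
    cliffordPotential E₁ E₂ (v₁ * (1 + E₁ / (v₁ * v₂))) (v₂ / (1 + E₁ / (v₁ * v₂))) =
      v₁ + v₂ + (E₁ + E₂) / v₂ + E₁ * E₂ / (v₁ * v₂ ^ 2) := by
  rw [one_add_div (mul_ne_zero hv₁ hv₂)] at hw ⊢
  have hsum : v₁ * v₂ + E₁ ≠ 0 := (div_ne_zero_iff.mp hw).1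
  unfold cliffordPotential
  field_simp
  ring

theorem div_one_add_div_add_div_one_add_div {u₁ u₂ : K} (hu₂ : u₂ ≠ 0)
    (hw : 1 + u₁ / u₂ ≠ 0) :
    u₁ / (1 + u₁ / u₂) + u₂ / (1 + u₁ / u₂) = u₂ := by
  rw [← add_div, div_eq_iff hw, mul_add, mul_one, mul_div_cancel₀ _ hu₂, add_comm]

end WallCrossing

theorem stmt_12_general (E₁ E₂ u₁ u₂ : ℂ) (hu₁ : u₁ ≠ 0) (hu₂ : u₂ ≠ 0)
    (h1w : 1 + u₁ / u₂ ≠ 0)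
    (h1wt : 1 + E₁ * (1 + u₁ / u₂) ^ 2 / (u₁ * u₂) ≠ 0) :
    (u₁ * (1 + E₁ * (1 + u₁ / u₂) ^ 2 / (u₁ * u₂)) / (1 + u₁ / u₂)) +
      (u₂ / ((1 + u₁ / u₂) * (1 + E₁ * (1 + u₁ / u₂) ^ 2 / (u₁ * u₂)))) +
      E₁ / (u₁ * (1 + E₁ * (1 + u₁ / u₂) ^ 2 / (u₁ * u₂)) / (1 + u₁ / u₂)) +
      E₂ / (u₂ / ((1 + u₁ / u₂) * (1 + E₁ * (1 + u₁ / u₂) ^ 2 / (u₁ * u₂)))) =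
    u₂ + (E₁ + E₂) * (1 + u₁ / u₂) / u₂ +
      E₁ * E₂ * (1 + u₁ / u₂) ^ 3 / (u₁ * u₂ ^ 2) := by
  set s := 1 + u₁ / u₂
  have hwt : E₁ * s ^ 2 / (u₁ * u₂) = E₁ / (u₁ / s * (u₂ / s)) := by
    field_simp
  rw [hwt] at h1wt ⊢
  have hv₁ : u₁ / s ≠ 0 := div_ne_zero hu₁ h1w
  have hv₂ : u₂ / s ≠ 0 := div_ne_zero hu₂ h1w
  calc _ = cliffordPotential E₁ E₂ (u₁ / s * (1 + E₁ / (u₁ / s * (u₂ / s))))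
        (u₂ / s / (1 + E₁ / (u₁ / s * (u₂ / s)))) := by
        rw [cliffordPotential, div_div, mul_div_right_comm]
    _ = u₁ / s + u₂ / s + (E₁ + E₂) / (u₂ / s) + E₁ * E₂ / (u₁ / s * (u₂ / s) ^ 2) :=
        cliffordPotential_wallCrossing hv₁ hv₂ h1wt
    _ = _ := by
        rw [div_one_add_div_add_div_one_add_div hu₂ h1w]
        field_simp

/-- Composite wall-crossing computation in `ℂP¹ × ℂP¹` predicting the superpotential
of the `T(1,2,9)` torus: with `w = u₁/u₂`, `w̃ = E₁(1+w)²/(u₁u₂)`,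
`z₁ = u₁(1+w̃)/(1+w)` and `z₂ = u₂/((1+w)(1+w̃))`, the Clifford superpotential
`z₁ + z₂ + E₁/z₁ + E₂/z₂` equals
`u₂ + (E₁+E₂)(1+w)/u₂ + E₁E₂(1+w)³/(u₁u₂²)`. -/
theorem stmt_12 (E₁ E₂ u₁ u₂ : ℂ) (hE₁ : E₁ ≠ 0) (hu₁ : u₁ ≠ 0) (hu₂ : u₂ ≠ 0)
    (h1w : 1 + u₁ / u₂ ≠ 0)
    (h1wt : 1 + E₁ * (1 + u₁ / u₂) ^ 2 / (u₁ * u₂) ≠ 0) :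
    (u₁ * (1 + E₁ * (1 + u₁ / u₂) ^ 2 / (u₁ * u₂)) / (1 + u₁ / u₂)) +
      (u₂ / ((1 + u₁ / u₂) * (1 + E₁ * (1 + u₁ / u₂) ^ 2 / (u₁ * u₂)))) +
      E₁ / (u₁ * (1 + E₁ * (1 + u₁ / u₂) ^ 2 / (u₁ * u₂)) / (1 + u₁ / u₂)) +
      E₂ / (u₂ / ((1 + u₁ / u₂) * (1 + E₁ * (1 + u₁ / u₂) ^ 2 / (u₁ * u₂)))) =
    u₂ + (E₁ + E₂) * (1 + u₁ / u₂) / u₂ +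
      E₁ * E₂ * (1 + u₁ / u₂) ^ 3 / (u₁ * u₂ ^ 2) :=
  stmt_12_general E₁ E₂ u₁ u₂ hu₁ hu₂ h1w h1wt
end

section
/- Every Markov triple can be obtained from (1,1,1) by a finite sequence of moves, each of which is either a permutation of the three entries or the mutation (a, b, c) ↦ (a, b, 3ab − c). That is, if positive integers a, b, c satisfy a² + b² + c² = 3abc, then (a, b, c) is in the reflexive-transitive closure, starting from (1,1,1), of the relation generated by permutations of triples and by (a, b, c) ↦ (a, b, 3ab − c). -/
/-!
Vieta descent. For a Markov triple `(a, b, c)` the numbers `c` and `c' = 3ab - c` are the two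
roots of `x² - 3ab x + a² + b²`, so `(a, b, c')` is again a Markov triple, and `c c' = a² + b²`
shows `c' > 0`. After a permutation putting the largest entry last, `c > 1` forces `c' < c`, so the
sum strictly decreases; since the mutation is an involution, `(a, b, c)` is reached from
`(a, b, c')` in one step. The descent stops only at `(1, 1, 1)`.
-/

/-- One step in the Markov tree: either a permutation of the entries of the triple,
or the mutation `(a, b, c) ↦ (a, b, 3ab − c)`. -/
def MarkovStep (p q : ℤ × ℤ × ℤ) : Prop :=
  (∃ a b c : ℤ, p = (a, b, c) ∧
    (q = (a, c, b) ∨ q = (b, a, c) ∨ q = (b, c, a) ∨ q = (c, a, b) ∨ q = (c, b, a))) ∨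
  (∃ a b c : ℤ, p = (a, b, c) ∧ q = (a, b, 3 * a * b - c))

namespace MarkovStep

theorem swap_last_two (a b c : ℤ) : MarkovStep (a, b, c) (a, c, b) :=
  Or.inl ⟨a, b, c, rfl, Or.inl rfl⟩

theorem swap_first_last (a b c : ℤ) : MarkovStep (a, b, c) (c, b, a) :=
  Or.inl ⟨a, b, c, rfl, Or.inr <| Or.inr <| Or.inr <| Or.inr rfl⟩

theorem mutate (a b c : ℤ) : MarkovStep (a, b, c) (a, b, 3 * a * b - c) :=
  Or.inr ⟨a, b, c, rfl, rfl⟩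

end MarkovStep

section Mutation

variable {a b c : ℤ}

theorem markov_mutate (hM : a ^ 2 + b ^ 2 + c ^ 2 = 3 * a * b * c) :
    a ^ 2 + b ^ 2 + (3 * a * b - c) ^ 2 = 3 * a * b * (3 * a * b - c) := by
  linear_combination hM

theorem mul_mutate_eq (hM : a ^ 2 + b ^ 2 + c ^ 2 = 3 * a * b * c) :
    c * (3 * a * b - c) = a ^ 2 + b ^ 2 := by
  linear_combination -hM

theorem mutate_pos (ha : 0 < a) (hc : 0 < c) (hM : a ^ 2 + b ^ 2 + c ^ 2 = 3 * a * b * c) :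
    0 < 3 * a * b - c :=
  pos_of_mul_pos_right (by rw [mul_mutate_eq hM]; positivity) hc.le

-- Integrality matters: over `ℝ` this fails near `(1, 1, 1)`.
theorem mutate_lt (ha : 0 < a) (hb : 0 < b) (hac : a ≤ c) (hbc : b ≤ c) (hc : 1 < c)
    (hM : a ^ 2 + b ^ 2 + c ^ 2 = 3 * a * b * c) : 3 * a * b - c < c := by
  nlinarith [mul_le_mul hac hbc hb.le (by omega : (0 : ℤ) ≤ c)]

end Mutation

theorem reflTransGen_markovStep_of_max_last (N : ℤ)
    (ih : ∀ x y z : ℤ, 0 < x → 0 < y → 0 < z → x ^ 2 + y ^ 2 + z ^ 2 = 3 * x * y * z →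
      x + y + z < N → Relation.ReflTransGen MarkovStep (1, 1, 1) (x, y, z))
    (a b c : ℤ) (ha : 0 < a) (hb : 0 < b) (hac : a ≤ c) (hbc : b ≤ c) (hN : a + b + c ≤ N)
    (hM : a ^ 2 + b ^ 2 + c ^ 2 = 3 * a * b * c) :
    Relation.ReflTransGen MarkovStep (1, 1, 1) (a, b, c) := by
  rcases eq_or_lt_of_le (show 1 ≤ c by omega) with hc | hc
  · obtain ⟨rfl, rfl, rfl⟩ : a = 1 ∧ b = 1 ∧ c = 1 := by omega
    exact .refl
  · have hpos := mutate_pos ha (by omega) hM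
    have hlt := mutate_lt ha hb hac hbc hc hM
    have hreach := ih a b _ ha hb hpos (markov_mutate hM) (by omega)
    simpa using hreach.tail (MarkovStep.mutate a b (3 * a * b - c))

/-- Every Markov triple is obtained from `(1,1,1)` by a finite sequence of
permutations and mutations `(a, b, c) ↦ (a, b, 3ab − c)`. -/
theorem stmt_13 (a b c : ℤ) (ha : 0 < a) (hb : 0 < b) (hc : 0 < c)
    (hM : a ^ 2 + b ^ 2 + c ^ 2 = 3 * a * b * c) :
    Relation.ReflTransGen MarkovStep (1, 1, 1) (a, b, c) := by
  induction hn : (a + b + c).toNat using Nat.strong_induction_on generalizing a b c with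
  | _ n ih =>
  have ih' : ∀ x y z : ℤ, 0 < x → 0 < y → 0 < z → x ^ 2 + y ^ 2 + z ^ 2 = 3 * x * y * z →
      x + y + z < a + b + c → Relation.ReflTransGen MarkovStep (1, 1, 1) (x, y, z) :=
    fun x y z hx hy hz hM' hlt => ih _ (by omega) x y z hx hy hz hM' rfl
  have descend := reflTransGen_markovStep_of_max_last (a + b + c) ih'
  rcases le_total b c with hbc | hcb
  · rcases le_total a c with hac | hca
    · exact descend a b c ha hb hac hbc le_rfl hM
    · exact (descend c b a hc hb hca (by omega) (by omega) (by linear_combination hM)).tail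
        (MarkovStep.swap_first_last c b a)
  · rcases le_total a b with hab | hba
    · exact (descend a c b ha hc hab hcb (by omega) (by linear_combination hM)).tail
        (MarkovStep.swap_last_two a c b)
    · exact (descend c b a hc hb (by omega) hba (by omega) (by linear_combination hM)).tail
        (MarkovStep.swap_first_last c b a)
end
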